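/- arXiv:1812.00522 — 6 statements merged into one kernel-verified Lean document; each statement's English description precedes it below -/
import Mathlib

section
/- If u : ℝ → ℝ satisfies the Painlevé II equation u'' = t·u + 2u³ and a pair (q₂, α) satisfies the coupled ODE system q₂' = (2/3)·α·q₂ + (u'/u)·(1+q₂)(2−q₂)/3 and α' = α·((2/3)·α + (u'/u)·(2−q₂)/3) − (t/6)·(1+q₂) − (u²/3)·(3+q₂) on an interval where u ≠ 0, then the formal power series q₂(t) = 2^{-1/2}(−t)^{-3/2} + (21/8)(−t)^{-3} + O((−t)^{-9/2}) and α(t) = 2^{-1/2}(−t)^{1/2} − (1/8)(−t)^{-1} + O((−t)^{-5/2}) is an asymptotic solution of this system at t = −∞, given that u has the asymptotic expansion u(t) = √(−t/2)·(1 − (1/8)(−t)^{-3} + O((−t)^{-6})). -/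
open Real Filter Asymptotics Set

/-!
Write `x = -t` and let `m = √(x/2) (1 - x⁻³/8)` be the two-term Hastings–McLeod approximation, so
that `u = m + O(x^(-11/2))`. Squaring gives `u² = x/2 - x⁻²/8 + O(x⁻⁵)` at once. The derivative
is not controlled by the hypothesis on `u` alone, but Painlevé II expresses `u''` through `u`,
so `(u - m)'' = O(x^(-9/2))` as well; the mean value theorem on `[t - 1, t]` then bounds
`(u - m)'` by `|u - m|` and `|(u - m)''|`, which gives `u'/u = -x⁻¹/2 + O(x⁻⁴)`. Substituting the
series, each residual is an explicit sum of powers of `x` whose leading terms cancel, plus the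
two errors above multiplied by factors of order `1` (resp. `x^(1/2)`).
-/

theorem Asymptotics.IsBigO.div_const {α : Type*} {l : Filter α} {f g : α → ℝ}
    (h : f =O[l] g) (c : ℝ) : (fun x => f x / c) =O[l] g := by
  simpa only [div_eq_inv_mul] using h.const_mul_left c⁻¹

lemma hasDerivAt_neg_rpow {t : ℝ} (ht : t < 0) (a b : ℝ) (hb : b = a - 1) :
    HasDerivAt (fun s : ℝ => (-s) ^ a) (-a * (-t) ^ b) t := by
  subst hb
  convert (hasDerivAt_neg t).rpow_const (p := a) (Or.inl (by linarith)) using 1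
  ring

lemma neg_rpow_le_neg_rpow {s t a : ℝ} (hst : s ≤ t) (ht : t < 0) (ha : a ≤ 0) :
    (-s) ^ a ≤ (-t) ^ a :=
  rpow_le_rpow_of_nonpos (by linarith) (by linarith) ha

lemma isBigO_neg_rpow {a b : ℝ} (hab : a ≤ b) :
    (fun t : ℝ => (-t) ^ a) =O[atBot] fun t => (-t) ^ b := by
  refine IsBigO.of_bound 1 ?_
  filter_upwards [eventually_le_atBot (-1)] with t ht
  rw [one_mul, norm_of_nonneg (rpow_nonneg (by linarith) _),
    norm_of_nonneg (rpow_nonneg (by linarith) _)]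
  exact rpow_le_rpow_of_exponent_le (by linarith) hab

lemma isBigO_neg_rpow_one {a : ℝ} (ha : a ≤ 0) :
    (fun t : ℝ => (-t) ^ a) =O[atBot] fun _ => (1 : ℝ) := by
  simpa using isBigO_neg_rpow ha

lemma isLittleO_neg_rpow_one {a : ℝ} (ha : a < 0) :
    (fun t : ℝ => (-t) ^ a) =o[atBot] fun _ => (1 : ℝ) := by
  rw [isLittleO_one_iff]
  simpa [Function.comp_def] using
    (tendsto_rpow_neg_atTop (neg_pos.2 ha)).comp tendsto_neg_atBot_atTop

theorem Asymptotics.IsBigO.mul_neg_rpow {f g : ℝ → ℝ} {a b : ℝ}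
    (hf : f =O[atBot] fun t => (-t) ^ a) (hg : g =O[atBot] fun t => (-t) ^ b) :
    (fun t => f t * g t) =O[atBot] fun t => (-t) ^ (a + b) := by
  refine (hf.mul hg).congr' EventuallyEq.rfl ?_
  filter_upwards [eventually_lt_atBot 0] with t ht
  rw [rpow_add (by linarith)]

lemma abs_deriv_le_of_hasDerivAt_of_hasDerivAt {f f' f'' : ℝ → ℝ} {t M : ℝ}
    (hf : ∀ s ∈ Icc (t - 1) t, HasDerivAt f (f' s) s)
    (hf' : ∀ s ∈ Icc (t - 1) t, HasDerivAt f' (f'' s) s)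
    (hM : ∀ s ∈ Icc (t - 1) t, |f'' s| ≤ M) :
    |f' t| ≤ |f t| + |f (t - 1)| + M := by
  obtain ⟨ξ, hξ, hslope⟩ := exists_hasDerivAt_eq_slope f f' (sub_one_lt t)
    (fun s hs => (hf s hs).continuousAt.continuousWithinAt)
    (fun s hs => hf s (Ioo_subset_Icc_self hs))
  rw [sub_sub_cancel, div_one] at hslope
  have hsub : Icc ξ t ⊆ Icc (t - 1) t := Icc_subset_Icc_left hξ.1.le
  have hmvt := norm_image_sub_le_of_norm_deriv_le_segment'
    (fun s hs => (hf' s (hsub hs)).hasDerivWithinAt)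
    (fun s hs => hM s (hsub (Ico_subset_Icc_self hs))) t ⟨hξ.2.le, le_rfl⟩
  rw [Real.norm_eq_abs] at hmvt
  have hM0 : 0 ≤ M := (abs_nonneg _).trans (hM t ⟨by linarith, le_rfl⟩)
  have hMξ : M * (t - ξ) ≤ M := mul_le_of_le_one_right hM0 (by linarith [hξ.1])
  have hξbound : |f' ξ| ≤ |f t| + |f (t - 1)| := hslope ▸ abs_sub _ _
  linarith [abs_sub_abs_le_abs_sub (f' t) (f' ξ)]

lemma eventually_forall_Icc_sub_one {P : ℝ → Prop} (h : ∀ᶠ s in atBot, P s) :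
    ∀ᶠ t in atBot, ∀ s ∈ Icc (t - 1) t, P s := by
  obtain ⟨T, hT⟩ := eventually_atBot.1 h
  exact eventually_atBot.2 ⟨T, fun t ht s hs => hT s (hs.2.trans ht)⟩

lemma isBigO_deriv_of_isBigO_of_isBigO_deriv2 {f f' f'' : ℝ → ℝ} {a : ℝ} (ha : a ≤ 0)
    (hf : ∀ᶠ t in atBot, HasDerivAt f (f' t) t) (hf' : ∀ᶠ t in atBot, HasDerivAt f' (f'' t) t)
    (h₀ : f =O[atBot] fun t => (-t) ^ a) (h₂ : f'' =O[atBot] fun t => (-t) ^ a) :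
    f' =O[atBot] fun t => (-t) ^ a := by
  obtain ⟨C, hC0, hC⟩ := h₀.exists_nonneg
  obtain ⟨D, hD0, hD⟩ := h₂.exists_nonneg
  have hbound : ∀ {g : ℝ → ℝ} {K : ℝ}, 0 ≤ K → IsBigOWith K atBot g (fun t => (-t) ^ a) →
      ∀ᶠ t in atBot, ∀ s ∈ Icc (t - 1) t, |g s| ≤ K * (-t) ^ a := by
    intro g K hK hg
    filter_upwards [eventually_forall_Icc_sub_one (hg.bound.and (eventually_lt_atBot 0)),
      eventually_lt_atBot 0] with t hgt ht s hs
    obtain ⟨hgs, hs0⟩ := hgt s hs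
    rw [Real.norm_eq_abs, norm_of_nonneg (rpow_nonneg (by linarith) _)] at hgs
    exact hgs.trans (mul_le_mul_of_nonneg_left (neg_rpow_le_neg_rpow hs.2 ht ha) hK)
  refine IsBigO.of_bound (2 * C + D) ?_
  filter_upwards [eventually_forall_Icc_sub_one hf, eventually_forall_Icc_sub_one hf',
    hbound hC0 hC, hbound hD0 hD, eventually_lt_atBot 0] with t h₁ h₂ hft hf''t ht
  rw [Real.norm_eq_abs, norm_of_nonneg (rpow_nonneg (by linarith) _)]
  have := abs_deriv_le_of_hasDerivAt_of_hasDerivAt h₁ h₂ hf''t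
  linarith [hft t ⟨by linarith, le_rfl⟩, hft (t - 1) ⟨le_rfl, by linarith⟩]

namespace PainleveII

noncomputable def uApprox (t : ℝ) : ℝ := √(-t / 2) * (1 - (1 / 8) * (-t) ^ (-(3 : ℝ)))

noncomputable def uApproxDeriv (t : ℝ) : ℝ :=
  -((1 / 2) * (-t) ^ (-(1 : ℝ) / 2) + (5 / 16) * (-t) ^ (-(7 : ℝ) / 2)) / √2

noncomputable def uApproxDeriv2 (t : ℝ) : ℝ :=
  -((1 / 4) * (-t) ^ (-(3 : ℝ) / 2) + (35 / 32) * (-t) ^ (-(9 : ℝ) / 2)) / √2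

noncomputable def qSeries (t : ℝ) : ℝ := (-t) ^ (-(3 : ℝ) / 2) / √2 + (21 / 8) * (-t) ^ (-(3 : ℝ))

noncomputable def αSeries (t : ℝ) : ℝ := (-t) ^ ((1 : ℝ) / 2) / √2 - (1 / 8) * (-t) ^ (-(1 : ℝ))

lemma sqrt_neg_div_two (t : ℝ) : √(-t / 2) = (-t) ^ ((1 : ℝ) / 2) / √2 := by
  rw [sqrt_div' _ (by norm_num), sqrt_eq_rpow]

lemma uApprox_eq {t : ℝ} (ht : t < 0) :
    uApprox t = ((-t) ^ ((1 : ℝ) / 2) - (1 / 8) * (-t) ^ (-(5 : ℝ) / 2)) / √2 := by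
  have hx : 0 < -t := by linarith
  rw [uApprox, sqrt_neg_div_two t, show -(5 : ℝ) / 2 = 1 / 2 + -3 by norm_num, rpow_add hx]
  ring

lemma hasDerivAt_uApprox {t : ℝ} (ht : t < 0) : HasDerivAt uApprox (uApproxDeriv t) t := by
  have h₁ := hasDerivAt_neg_rpow ht ((1 : ℝ) / 2) (-(1 : ℝ) / 2) (by norm_num)
  have h₂ := hasDerivAt_neg_rpow ht (-(5 : ℝ) / 2) (-(7 : ℝ) / 2) (by norm_num)
  refine ((h₁.sub (h₂.const_mul (1 / 8))).div_const √2).congr_of_eventuallyEq ?_ |>.congr_deriv ?_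
  · filter_upwards [eventually_lt_nhds ht] with s hs using uApprox_eq hs
  · rw [uApproxDeriv]; ring

lemma hasDerivAt_uApproxDeriv {t : ℝ} (ht : t < 0) :
    HasDerivAt uApproxDeriv (uApproxDeriv2 t) t := by
  have h₁ := hasDerivAt_neg_rpow ht (-(1 : ℝ) / 2) (-(3 : ℝ) / 2) (by norm_num)
  have h₂ := hasDerivAt_neg_rpow ht (-(7 : ℝ) / 2) (-(9 : ℝ) / 2) (by norm_num)
  exact (((h₁.const_mul (1 / 2)).add (h₂.const_mul (5 / 16))).neg.div_const √2).congr_deriv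
    (by rw [uApproxDeriv2]; ring)

lemma hasDerivAt_qSeries {t : ℝ} (ht : t < 0) :
    HasDerivAt qSeries ((3 / 2) * (-t) ^ (-(5 : ℝ) / 2) / √2 + (63 / 8) * (-t) ^ (-(4 : ℝ))) t := by
  have h₁ := hasDerivAt_neg_rpow ht (-(3 : ℝ) / 2) (-(5 : ℝ) / 2) (by norm_num)
  have h₂ := hasDerivAt_neg_rpow ht (-(3 : ℝ)) (-(4 : ℝ)) (by norm_num)
  exact ((h₁.div_const √2).add (h₂.const_mul (21 / 8))).congr_deriv (by ring)

lemma hasDerivAt_αSeries {t : ℝ} (ht : t < 0) :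
    HasDerivAt αSeries (-(1 / 2) * (-t) ^ (-(1 : ℝ) / 2) / √2 - (1 / 8) * (-t) ^ (-(2 : ℝ))) t := by
  have h₁ := hasDerivAt_neg_rpow ht ((1 : ℝ) / 2) (-(1 : ℝ) / 2) (by norm_num)
  have h₂ := hasDerivAt_neg_rpow ht (-(1 : ℝ)) (-(2 : ℝ)) (by norm_num)
  exact ((h₁.div_const √2).sub (h₂.const_mul (1 / 8))).congr_deriv (by ring)

lemma exists_eq_neg_sq {t : ℝ} (ht : t < 0) : ∃ s, 0 < s ∧ t = -s ^ 2 :=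
  ⟨√(-t), sqrt_pos.2 (by linarith), by rw [sq_sqrt (by linarith)]; ring⟩

lemma sqrt_two_pow_three : √2 ^ 3 = 2 * √2 := by
  rw [pow_succ, sq_sqrt zero_le_two]

lemma uApprox_sq_add {t : ℝ} (ht : t < 0) :
    uApprox t ^ 2 + t / 2 + (1 / 8) * (-t) ^ (-(2 : ℝ)) = (1 / 128) * (-t) ^ (-(5 : ℝ)) := by
  obtain ⟨s, hs, rfl⟩ := exists_eq_neg_sq ht
  rw [uApprox_eq ht]
  simp only [neg_neg, rpow_div_two_eq_sqrt _ (sq_nonneg s), sqrt_sq hs.le, rpow_neg (sq_nonneg s),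
    rpow_neg hs.le, rpow_one, rpow_ofNat]
  field_simp
  ring_nf
  simp only [sq_sqrt zero_le_two]
  ring

lemma uApproxDeriv2_add {t : ℝ} (ht : t < 0) :
    (1 / 4) * (-t) ^ (-(2 : ℝ)) * uApprox t + uApproxDeriv2 t
      = -(9 / 8) * (-t) ^ (-(9 : ℝ) / 2) / √2 := by
  obtain ⟨s, hs, rfl⟩ := exists_eq_neg_sq ht
  rw [uApprox_eq ht, uApproxDeriv2]
  simp only [neg_neg, rpow_div_two_eq_sqrt _ (sq_nonneg s), sqrt_sq hs.le, rpow_neg (sq_nonneg s),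
    rpow_neg hs.le, rpow_one, rpow_ofNat]
  field_simp
  ring

lemma uApproxDeriv_add {t : ℝ} (ht : t < 0) :
    uApproxDeriv t + (-t) ^ (-(1 : ℝ)) / 2 * uApprox t = -(3 / 8) * (-t) ^ (-(7 : ℝ) / 2) / √2 := by
  obtain ⟨s, hs, rfl⟩ := exists_eq_neg_sq ht
  rw [uApprox_eq ht, uApproxDeriv]
  simp only [neg_neg, rpow_div_two_eq_sqrt _ (sq_nonneg s), sqrt_sq hs.le, rpow_neg (sq_nonneg s),
    rpow_neg hs.le, rpow_one, rpow_ofNat]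
  field_simp
  ring

lemma qSeries_defect {t : ℝ} (ht : t < 0) :
    deriv qSeries t - (2 / 3) * αSeries t * qSeries t
        + (-t) ^ (-(1 : ℝ)) / 2 * ((1 + qSeries t) * (2 - qSeries t) / 3)
      = (811 / 96) * (-t) ^ (-(4 : ℝ)) - (7 / 16) * √2 * (-t) ^ (-(11 : ℝ) / 2)
        - (147 / 128) * (-t) ^ (-(7 : ℝ)) := by
  rw [(hasDerivAt_qSeries ht).deriv, qSeries, αSeries]
  obtain ⟨s, hs, rfl⟩ := exists_eq_neg_sq ht
  simp only [neg_neg, rpow_div_two_eq_sqrt _ (sq_nonneg s), sqrt_sq hs.le, rpow_neg (sq_nonneg s),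
    rpow_neg hs.le, rpow_one, rpow_ofNat]
  field_simp
  ring_nf
  simp only [sq_sqrt zero_le_two, sqrt_two_pow_three]
  ring

lemma αSeries_defect {t : ℝ} (ht : t < 0) :
    deriv αSeries t
        - αSeries t * ((2 / 3) * αSeries t - (-t) ^ (-(1 : ℝ)) / 2 * ((2 - qSeries t) / 3))
        + (t / 6) * (1 + qSeries t) - ((t / 2 + (1 / 8) * (-t) ^ (-(2 : ℝ))) / 3) * (3 + qSeries t)
      = -(37 / 96) * (-t) ^ (-(2 : ℝ)) - (11 / 48) * √2 * (-t) ^ (-(7 : ℝ) / 2)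
        - (7 / 128) * (-t) ^ (-(5 : ℝ)) := by
  rw [(hasDerivAt_αSeries ht).deriv, qSeries, αSeries]
  obtain ⟨s, hs, rfl⟩ := exists_eq_neg_sq ht
  simp only [neg_neg, rpow_div_two_eq_sqrt _ (sq_nonneg s), sqrt_sq hs.le, rpow_neg (sq_nonneg s),
    rpow_neg hs.le, rpow_one, rpow_ofNat]
  field_simp
  ring_nf
  simp only [sq_sqrt zero_le_two, sqrt_two_pow_three]
  ring

lemma isBigO_sqrt_neg_div_two :
    (fun t : ℝ => √(-t / 2)) =O[atBot] fun t => (-t) ^ ((1 : ℝ) / 2) := by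
  simp only [sqrt_neg_div_two]
  exact (isBigO_refl _ _).div_const √2

lemma isBigO_inv_sqrt_neg_div_two :
    (fun t : ℝ => (√(-t / 2))⁻¹) =O[atBot] fun t => (-t) ^ (-(1 : ℝ) / 2) := by
  refine ((isBigO_refl (fun t : ℝ => (-t) ^ (-(1 : ℝ) / 2)) atBot).const_mul_left √2).congr' ?_
    EventuallyEq.rfl
  filter_upwards [eventually_lt_atBot 0] with t ht
  rw [sqrt_neg_div_two, inv_div, show -(1 : ℝ) / 2 = -(1 / 2) by ring, rpow_neg (by linarith)]
  ring

lemma isBigO_qSeries : qSeries =O[atBot] fun _ => (1 : ℝ) :=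
  ((isBigO_neg_rpow_one (by norm_num)).div_const √2).add
    ((isBigO_neg_rpow_one (by norm_num)).const_mul_left _)

lemma isBigO_αSeries : αSeries =O[atBot] fun t => (-t) ^ ((1 : ℝ) / 2) :=
  ((isBigO_refl _ _).div_const √2).sub
    ((isBigO_neg_rpow (by norm_num)).const_mul_left _)

lemma isBigO_const_add_qSeries (c : ℝ) :
    (fun t => c + qSeries t) =O[atBot] fun _ => (1 : ℝ) :=
  (isBigO_const_const c one_ne_zero atBot).add isBigO_qSeries

lemma isBigO_const_sub_qSeries (c : ℝ) :
    (fun t => c - qSeries t) =O[atBot] fun _ => (1 : ℝ) :=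
  (isBigO_const_const c one_ne_zero atBot).sub isBigO_qSeries

lemma isBigO_qSeries_residual {ρ : ℝ → ℝ}
    (hρ : (fun t => ρ t + (-t) ^ (-(1 : ℝ)) / 2) =O[atBot] fun t => (-t) ^ (-(4 : ℝ))) :
    (fun t => deriv qSeries t - ((2 / 3) * αSeries t * qSeries t
        + ρ t * ((1 + qSeries t) * (2 - qSeries t) / 3))) =O[atBot] fun t => (-t) ^ (-(4 : ℝ)) := by
  have hdefect : (fun t : ℝ => (811 / 96) * (-t) ^ (-(4 : ℝ))
      - (7 / 16) * √2 * (-t) ^ (-(11 : ℝ) / 2) - (147 / 128) * (-t) ^ (-(7 : ℝ)))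
      =O[atBot] fun t => (-t) ^ (-(4 : ℝ)) :=
    (((isBigO_refl _ _).const_mul_left _).sub
      ((isBigO_neg_rpow (by norm_num)).const_mul_left _)).sub
      ((isBigO_neg_rpow (by norm_num)).const_mul_left _)
  have hB := ((isBigO_const_add_qSeries 1).mul (isBigO_const_sub_qSeries 2)).div_const 3
  refine (hdefect.sub ((hρ.mul hB).congr_right fun _ => by norm_num)).congr' ?_ EventuallyEq.rfl
  filter_upwards [eventually_lt_atBot 0] with t ht
  linear_combination (qSeries_defect ht).symm

lemma isBigO_αSeries_residual {ρ U : ℝ → ℝ}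
    (hρ : (fun t => ρ t + (-t) ^ (-(1 : ℝ)) / 2) =O[atBot] fun t => (-t) ^ (-(4 : ℝ)))
    (hU : (fun t => U t + t / 2 + (1 / 8) * (-t) ^ (-(2 : ℝ)))
      =O[atBot] fun t => (-t) ^ (-(5 : ℝ))) :
    (fun t => deriv αSeries t - (αSeries t * ((2 / 3) * αSeries t + ρ t * ((2 - qSeries t) / 3))
        - (t / 6) * (1 + qSeries t) - (U t / 3) * (3 + qSeries t)))
      =O[atBot] fun t => (-t) ^ (-(2 : ℝ)) := by
  have hdefect : (fun t : ℝ => -(37 / 96) * (-t) ^ (-(2 : ℝ))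
      - (11 / 48) * √2 * (-t) ^ (-(7 : ℝ) / 2) - (7 / 128) * (-t) ^ (-(5 : ℝ)))
      =O[atBot] fun t => (-t) ^ (-(2 : ℝ)) :=
    (((isBigO_refl _ _).const_mul_left _).sub
      ((isBigO_neg_rpow (by norm_num)).const_mul_left _)).sub
      ((isBigO_neg_rpow (by norm_num)).const_mul_left _)
  have hA := ((isBigO_αSeries.mul (isBigO_const_sub_qSeries 2)).congr_right
    fun _ => mul_one _).div_const 3
  have hB := ((hU.mul (isBigO_const_add_qSeries 3)).congr_right fun _ => mul_one _).div_const 3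
  refine ((hdefect.sub ((hρ.mul_neg_rpow hA).trans (isBigO_neg_rpow (by norm_num)))).add
    (hB.trans (isBigO_neg_rpow (by norm_num)))).congr' ?_ EventuallyEq.rfl
  filter_upwards [eventually_lt_atBot 0] with t ht
  linear_combination (αSeries_defect ht).symm

section HastingsMcLeod

variable {u u' : ℝ → ℝ}
  (huasymp : (fun t => u t - √(-t / 2) * (1 - (1 / 8) * (-t) ^ (-(3 : ℝ))))
    =O[atBot] fun t => √(-t / 2) * (-t) ^ (-(6 : ℝ)))
include huasymp

lemma isBigO_sub_uApprox : (fun t => u t - uApprox t) =O[atBot] fun t => (-t) ^ (-(11 : ℝ) / 2) :=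
  huasymp.trans <| (isBigO_sqrt_neg_div_two.mul_neg_rpow (isBigO_refl _ _)).trans
    (isBigO_neg_rpow (by norm_num))

lemma isEquivalent_sqrt_neg_div_two : u ~[atBot] fun t => √(-t / 2) := by
  have hsmall : ∀ {a : ℝ}, a < 0 →
      (fun t : ℝ => √(-t / 2) * (-t) ^ a) =o[atBot] fun t => √(-t / 2) := fun ha =>
    ((isBigO_refl _ _).mul_isLittleO (isLittleO_neg_rpow_one ha)).congr_right fun _ => mul_one _
  refine ((huasymp.trans_isLittleO (hsmall (by norm_num))).sub
    ((hsmall (a := -3) (by norm_num)).const_mul_left (1 / 8))).congr_left fun t => ?_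
  simp only [Pi.sub_apply]
  ring

lemma isBigO_neg_rpow_half : u =O[atBot] fun t => (-t) ^ ((1 : ℝ) / 2) :=
  (isEquivalent_sqrt_neg_div_two huasymp).isBigO.trans isBigO_sqrt_neg_div_two

lemma isBigO_sq_add :
    (fun t => u t ^ 2 + t / 2 + (1 / 8) * (-t) ^ (-(2 : ℝ)))
      =O[atBot] fun t => (-t) ^ (-(5 : ℝ)) := by
  have hsub := isBigO_sub_uApprox huasymp
  have hadd : (fun t => u t + uApprox t) =O[atBot] fun t => (-t) ^ ((1 : ℝ) / 2) :=
    ((isBigO_neg_rpow_half huasymp).const_mul_left 2).sub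
      (hsub.trans (isBigO_neg_rpow (by norm_num)))
      |>.congr_left fun t => by ring
  refine ((hsub.mul_neg_rpow hadd).trans (isBigO_neg_rpow (by norm_num))).add
    ((isBigO_refl _ _).const_mul_left (1 / 128)) |>.congr' ?_ EventuallyEq.rfl
  filter_upwards [eventually_lt_atBot 0] with t ht
  linear_combination (uApprox_sq_add ht).symm

lemma isBigO_secondDeriv_sub :
    (fun t => t * u t + 2 * u t ^ 3 - uApproxDeriv2 t)
      =O[atBot] fun t => (-t) ^ (-(9 : ℝ) / 2) := by
  have h₁ := ((isBigO_neg_rpow_half huasymp).mul_neg_rpow (isBigO_sq_add huasymp)).const_mul_left 2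
  have h₂ := ((isBigO_refl (fun t : ℝ => (-t) ^ (-(2 : ℝ))) atBot).mul_neg_rpow
    (isBigO_sub_uApprox huasymp)).const_mul_left (1 / 4)
  have h₃ := ((isBigO_refl (fun t : ℝ => (-t) ^ (-(9 : ℝ) / 2)) atBot).const_mul_left
    (9 / 8)).div_const √2
  refine ((h₁.trans (isBigO_neg_rpow (by norm_num))).sub
    (h₂.trans (isBigO_neg_rpow (by norm_num)))).add h₃ |>.congr' ?_ EventuallyEq.rfl
  filter_upwards [eventually_lt_atBot 0] with t ht
  linear_combination uApproxDeriv2_add ht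

variable (hu : ∀ t, HasDerivAt u (u' t) t) (huODE : ∀ t, HasDerivAt u' (t * u t + 2 * u t ^ 3) t)
include hu huODE

lemma isBigO_deriv_sub :
    (fun t => u' t - uApproxDeriv t) =O[atBot] fun t => (-t) ^ (-(9 : ℝ) / 2) := by
  refine isBigO_deriv_of_isBigO_of_isBigO_deriv2 (by norm_num) ?_ ?_
    ((isBigO_sub_uApprox huasymp).trans (isBigO_neg_rpow (by norm_num)))
    (isBigO_secondDeriv_sub huasymp)
  · filter_upwards [eventually_lt_atBot 0] with t ht using (hu t).sub (hasDerivAt_uApprox ht)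
  · filter_upwards [eventually_lt_atBot 0] with t ht using
      (huODE t).sub (hasDerivAt_uApproxDeriv ht)

lemma isBigO_logDeriv_add :
    (fun t => u' t / u t + (-t) ^ (-(1 : ℝ)) / 2) =O[atBot] fun t => (-t) ^ (-(4 : ℝ)) := by
  have hequiv := isEquivalent_sqrt_neg_div_two huasymp
  have hnum : (fun t => u' t - uApproxDeriv t + (-t) ^ (-(1 : ℝ)) / 2 * (u t - uApprox t)
      - (3 / 8) * (-t) ^ (-(7 : ℝ) / 2) / √2) =O[atBot] fun t => (-t) ^ (-(7 : ℝ) / 2) :=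
    (((isBigO_deriv_sub huasymp hu huODE).trans (isBigO_neg_rpow (by norm_num))).add
      ((((isBigO_refl _ _).div_const 2).mul_neg_rpow (isBigO_sub_uApprox huasymp)).trans
        (isBigO_neg_rpow (by norm_num)))).sub
      (((isBigO_refl _ _).const_mul_left (3 / 8)).div_const √2)
  have hinv : (fun t => (u t)⁻¹) =O[atBot] fun t => (-t) ^ (-(1 : ℝ) / 2) :=
    hequiv.inv.isBigO.trans isBigO_inv_sqrt_neg_div_two
  refine ((hnum.mul_neg_rpow hinv).trans (isBigO_neg_rpow (by norm_num))).congr' ?_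
    EventuallyEq.rfl
  filter_upwards [eventually_lt_atBot 0,
    hequiv.eventually_pos ((eventually_lt_atBot 0).mono fun t ht => sqrt_pos.2 (by linarith))]
    with t ht hut
  rw [eq_comm, div_add' _ _ _ hut.ne', div_eq_mul_inv]
  congr 1
  linear_combination uApproxDeriv_add ht

end HastingsMcLeod

end PainleveII

open PainleveII in
theorem stmt1_general (u u' : ℝ → ℝ)
    (hu : ∀ t, HasDerivAt u (u' t) t)
    (huODE : ∀ t, HasDerivAt u' (t * u t + 2 * (u t) ^ 3) t)
    (huasymp : (fun t => u t - Real.sqrt (-t / 2) * (1 - (1 / 8) * (-t) ^ (-(3 : ℝ))))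
      =O[atBot] (fun t => Real.sqrt (-t / 2) * (-t) ^ (-(6 : ℝ)))) :
    (fun t =>
        deriv (fun s => (-s) ^ (-(3 : ℝ) / 2) / Real.sqrt 2 + (21 / 8) * (-s) ^ (-(3 : ℝ))) t
        - ((2 / 3) * ((-t) ^ ((1 : ℝ) / 2) / Real.sqrt 2 - (1 / 8) * (-t) ^ (-(1 : ℝ)))
             * ((-t) ^ (-(3 : ℝ) / 2) / Real.sqrt 2 + (21 / 8) * (-t) ^ (-(3 : ℝ)))
          + (u' t / u t) *
            ((1 + ((-t) ^ (-(3 : ℝ) / 2) / Real.sqrt 2 + (21 / 8) * (-t) ^ (-(3 : ℝ))))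
              * (2 - ((-t) ^ (-(3 : ℝ) / 2) / Real.sqrt 2 + (21 / 8) * (-t) ^ (-(3 : ℝ)))) / 3)))
      =O[atBot] (fun t => (-t) ^ (-(4 : ℝ)))
    ∧
    (fun t =>
        deriv (fun s => (-s) ^ ((1 : ℝ) / 2) / Real.sqrt 2 - (1 / 8) * (-s) ^ (-(1 : ℝ))) t
        - (((-t) ^ ((1 : ℝ) / 2) / Real.sqrt 2 - (1 / 8) * (-t) ^ (-(1 : ℝ)))
             * ((2 / 3) * ((-t) ^ ((1 : ℝ) / 2) / Real.sqrt 2 - (1 / 8) * (-t) ^ (-(1 : ℝ)))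
               + (u' t / u t) *
                 ((2 - ((-t) ^ (-(3 : ℝ) / 2) / Real.sqrt 2 + (21 / 8) * (-t) ^ (-(3 : ℝ)))) / 3))
          - (t / 6) * (1 + ((-t) ^ (-(3 : ℝ) / 2) / Real.sqrt 2 + (21 / 8) * (-t) ^ (-(3 : ℝ))))
          - ((u t) ^ 2 / 3) *
              (3 + ((-t) ^ (-(3 : ℝ) / 2) / Real.sqrt 2 + (21 / 8) * (-t) ^ (-(3 : ℝ))))))
      =O[atBot] (fun t => (-t) ^ (-(2 : ℝ))) := by
  have hρ := isBigO_logDeriv_add huasymp hu huODE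
  exact ⟨isBigO_qSeries_residual hρ,
    isBigO_αSeries_residual (U := fun t => u t ^ 2) hρ (isBigO_sq_add huasymp)⟩

/-- If `u` is the Hastings–McLeod solution of Painlevé II and `(q₂, α)` satisfies
the coupled ODE system of Grava et al., then the truncated series
`q₂ ≈ 2^{-1/2}(−t)^{-3/2} + (21/8)(−t)^{-3}` and
`α ≈ 2^{-1/2}(−t)^{1/2} − (1/8)(−t)^{-1}` is an asymptotic solution of the
system at `t = −∞`: substituting it into the ODEs produces residuals of
higher order, `O((−t)^{-4})` resp. `O((−t)^{-2})`. -/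
theorem stmt1 (u u' q2 α : ℝ → ℝ)
    (hu : ∀ t, HasDerivAt u (u' t) t)
    (huODE : ∀ t, HasDerivAt u' (t * u t + 2 * (u t) ^ 3) t)
    (hupos : ∀ t, 0 < u t)
    (hq2 : ∀ t, HasDerivAt q2
      ((2 / 3) * α t * q2 t + (u' t / u t) * ((1 + q2 t) * (2 - q2 t) / 3)) t)
    (hα : ∀ t, HasDerivAt α
      (α t * ((2 / 3) * α t + (u' t / u t) * ((2 - q2 t) / 3))
        - (t / 6) * (1 + q2 t) - ((u t) ^ 2 / 3) * (3 + q2 t)) t)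
    (huasymp : (fun t => u t - Real.sqrt (-t / 2) * (1 - (1 / 8) * (-t) ^ (-(3 : ℝ))))
      =O[atBot] (fun t => Real.sqrt (-t / 2) * (-t) ^ (-(6 : ℝ)))) :
    (fun t =>
        deriv (fun s => (-s) ^ (-(3 : ℝ) / 2) / Real.sqrt 2 + (21 / 8) * (-s) ^ (-(3 : ℝ))) t
        - ((2 / 3) * ((-t) ^ ((1 : ℝ) / 2) / Real.sqrt 2 - (1 / 8) * (-t) ^ (-(1 : ℝ)))
             * ((-t) ^ (-(3 : ℝ) / 2) / Real.sqrt 2 + (21 / 8) * (-t) ^ (-(3 : ℝ)))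
          + (u' t / u t) *
            ((1 + ((-t) ^ (-(3 : ℝ) / 2) / Real.sqrt 2 + (21 / 8) * (-t) ^ (-(3 : ℝ))))
              * (2 - ((-t) ^ (-(3 : ℝ) / 2) / Real.sqrt 2 + (21 / 8) * (-t) ^ (-(3 : ℝ)))) / 3)))
      =O[atBot] (fun t => (-t) ^ (-(4 : ℝ)))
    ∧
    (fun t =>
        deriv (fun s => (-s) ^ ((1 : ℝ) / 2) / Real.sqrt 2 - (1 / 8) * (-s) ^ (-(1 : ℝ))) t
        - (((-t) ^ ((1 : ℝ) / 2) / Real.sqrt 2 - (1 / 8) * (-t) ^ (-(1 : ℝ)))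
             * ((2 / 3) * ((-t) ^ ((1 : ℝ) / 2) / Real.sqrt 2 - (1 / 8) * (-t) ^ (-(1 : ℝ)))
               + (u' t / u t) *
                 ((2 - ((-t) ^ (-(3 : ℝ) / 2) / Real.sqrt 2 + (21 / 8) * (-t) ^ (-(3 : ℝ)))) / 3))
          - (t / 6) * (1 + ((-t) ^ (-(3 : ℝ) / 2) / Real.sqrt 2 + (21 / 8) * (-t) ^ (-(3 : ℝ))))
          - ((u t) ^ 2 / 3) *
              (3 + ((-t) ^ (-(3 : ℝ) / 2) / Real.sqrt 2 + (21 / 8) * (-t) ^ (-(3 : ℝ))))))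
      =O[atBot] (fun t => (-t) ^ (-(2 : ℝ))) :=
  stmt1_general u u' hu huODE huasymp
end

section
/- Let u be the Hastings–McLeod solution of Painlevé II, satisfying u(t) ~ Ai(t) as t → +∞ and u(t) ~ √(−t/2) as t → −∞, with u(t) > 0 for all t. Then the set {k ∈ ℝ : t + k·u(t)² ≥ 0 for all t ∈ ℝ} is nonempty, bounded below by 2, and has a minimum k₀ > 2. -/
/-!
Put `w t = t + 2 u(t)²`. Painlevé II gives `w'' = 4 u'² + 4 u² w`, so `w ≥ 0` would make `w`
convex. Since `u² ~ -t/2`, `w = o(|t|)` at `-∞`, and a convex function of sublinear growth at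
`-∞` is nondecreasing and has `w'(t) ≤ w(0)/|t|`. Far to the left this gives
`1 + 4uu' = w' ≤ 1/2`, which with `u² ≤ |t|` forces `w'' ≥ 4u'² ≥ 1/(16|t|)`; integrating,
`w' → -∞` at `-∞`, contradicting `w' ≥ 0`. So `k = 2` is not admissible. The admissible set is
closed, bounded below by `2` because `u²/|t| → 1/2`, and nonempty because `u² ≥ |t|/4` far to
the left while `u > 0` on compacts.
-/

open Real Filter Set Topology

def admissibleCoeffs (u : ℝ → ℝ) : Set ℝ := {k | ∀ t, 0 ≤ t + k * u t ^ 2}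

section Convex

variable {w w' : ℝ → ℝ}

theorem add_mul_sub_le_of_monotone_deriv (hw : ∀ t, HasDerivAt w (w' t) t) (hmono : Monotone w')
    (t s : ℝ) : w t + w' t * (s - t) ≤ w s := by
  have hderiv : deriv w = w' := funext fun x => (hw x).deriv
  have hconv : ConvexOn ℝ univ w :=
    MonotoneOn.convexOn_of_deriv convex_univ
      (fun x _ => (hw x).continuousAt.continuousWithinAt)
      (fun x _ => (hw x).differentiableAt.differentiableWithinAt)
      (hderiv ▸ hmono.monotoneOn _)
  rcases lt_trichotomy s t with hst | rfl | hts
  · have hslope := hconv.slope_le_of_hasDerivAt trivial trivial hst (hw t)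
    rw [slope_def_field, div_le_iff₀ (sub_pos.2 hst)] at hslope
    linarith
  · simp
  · have hslope := hconv.le_slope_of_hasDerivAt trivial trivial hts (hw t)
    rw [slope_def_field, le_div_iff₀ (sub_pos.2 hts)] at hslope
    linarith

theorem nonneg_of_monotone_deriv_of_tendsto_div_atBot (hw : ∀ t, HasDerivAt w (w' t) t)
    (hmono : Monotone w') (hlim : Tendsto (fun t => w t / t) atBot (𝓝 0)) (t : ℝ) :
    0 ≤ w' t := by
  have htangent : Tendsto (fun s => w' t + (w t - w' t * t) / s) atBot (𝓝 (w' t)) := by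
    simpa using tendsto_const_nhds.add
      (tendsto_const_nhds.div_atBot (tendsto_id (α := ℝ) (x := atBot)))
  refine le_of_tendsto_of_tendsto hlim htangent ?_
  filter_upwards [eventually_lt_atBot 0] with s hs
  rw [div_le_iff_of_neg hs, add_mul, div_mul_cancel₀ _ hs.ne]
  linarith [add_mul_sub_le_of_monotone_deriv hw hmono t s]

end Convex

theorem tendsto_atBot_of_div_neg_le_deriv {g g' : ℝ → ℝ} {c : ℝ} (hc : 0 < c)
    (hg : ∀ t, HasDerivAt g (g' t) t) (hbound : ∀ᶠ t in atBot, c / -t ≤ g' t) :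
    Tendsto g atBot atBot := by
  obtain ⟨T, hT⟩ := eventually_atBot.1 (hbound.and (eventually_lt_atBot 0))
  have hderiv : ∀ t < 0, HasDerivAt (fun t => g t + c * log (-t)) (g' t + c * t⁻¹) t := by
    intro t ht
    refine ((hg t).add (((hasDerivAt_neg t).log (neg_ne_zero.2 ht.ne)).const_mul c)).congr_deriv ?_
    field_simp
  have hmono : MonotoneOn (fun t => g t + c * log (-t)) (Iic T) := by
    refine monotoneOn_of_hasDerivWithinAt_nonneg (f' := fun t => g' t + c * t⁻¹) (convex_Iic T)
      (fun t ht => (hderiv t (hT t ht).2).continuousAt.continuousWithinAt) (fun t ht => ?_)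
      (fun t ht => ?_) <;> rw [interior_Iic] at ht
    · exact (hderiv t (hT t ht.le).2).hasDerivWithinAt
    · have hneg : c / -t = -(c * t⁻¹) := by rw [div_neg, div_eq_mul_inv]
      linarith [(hT t ht.le).1]
  have hlog : Tendsto (fun t => g T + c * log (-T) + -c * log (-t)) atBot atBot :=
    tendsto_atBot_add_const_left _ _
      ((tendsto_log_atTop.comp tendsto_neg_atBot_atTop).const_mul_atTop_of_neg (neg_lt_zero.2 hc))
  refine tendsto_atBot_mono' atBot ?_ hlog
  filter_upwards [eventually_le_atBot T] with t ht
  linarith [hmono ht (le_refl T) ht]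

theorem tendsto_sq_div_atBot_of_tendsto_div_sqrt {u : ℝ → ℝ}
    (h : Tendsto (fun t => u t / √(-t / 2)) atBot (𝓝 1)) :
    Tendsto (fun t => u t ^ 2 / t) atBot (𝓝 (-1 / 2)) := by
  have hsq := (h.pow 2).const_mul (-1 / 2)
  rw [one_pow, mul_one] at hsq
  refine hsq.congr' ?_
  filter_upwards [eventually_lt_atBot 0] with t ht
  rw [div_pow, sq_sqrt (by linarith)]
  field_simp

section SqAsymptotics

variable {u : ℝ → ℝ}

theorem eventually_neg_div_four_le_sq_and_sq_le_neg
    (hsq : Tendsto (fun t => u t ^ 2 / t) atBot (𝓝 (-1 / 2))) :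
    ∀ᶠ t in atBot, -t / 4 ≤ u t ^ 2 ∧ u t ^ 2 ≤ -t := by
  filter_upwards [hsq.eventually (Ioo_mem_nhds (by norm_num : (-1 : ℝ) < -1 / 2)
      (by norm_num : (-1 / 2 : ℝ) < -1 / 4)), eventually_lt_atBot 0] with t ⟨h1, h2⟩ ht
  rw [lt_div_iff_of_neg ht] at h1
  rw [div_lt_iff_of_neg ht] at h2
  constructor <;> linarith

theorem two_le_of_mem_admissibleCoeffs (hsq : Tendsto (fun t => u t ^ 2 / t) atBot (𝓝 (-1 / 2)))
    {k : ℝ} (hk : k ∈ admissibleCoeffs u) : 2 ≤ k := by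
  have hlim := (hsq.const_mul k).const_add 1
  have hle : 1 + k * (-1 / 2) ≤ 0 := by
    refine le_of_tendsto hlim ?_
    filter_upwards [eventually_lt_atBot 0] with t ht
    have hquot : 1 + k * (u t ^ 2 / t) = (t + k * u t ^ 2) / t := by
      rw [add_div, div_self ht.ne, mul_div_assoc]
    rw [hquot]
    exact div_nonpos_of_nonneg_of_nonpos (hk t) ht.le
  linarith

end SqAsymptotics

theorem isClosed_admissibleCoeffs (u : ℝ → ℝ) : IsClosed (admissibleCoeffs u) := by
  simp only [admissibleCoeffs, ofPred_forall]
  exact isClosed_iInter fun t => isClosed_le continuous_const (by fun_prop)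

theorem admissibleCoeffs_nonempty {u : ℝ → ℝ} (hcont : Continuous u) (hpos : ∀ t, 0 < u t)
    {c : ℝ} (hc : ∀ᶠ t in atBot, 0 ≤ t + c * u t ^ 2) : (admissibleCoeffs u).Nonempty := by
  obtain ⟨T, hT⟩ := eventually_atBot.1 (hc.and (eventually_le_atBot 0))
  have hT0 : T ≤ 0 := (hT T le_rfl).2
  obtain ⟨x, -, hx⟩ :=
    isCompact_Icc.exists_isMinOn (nonempty_Icc.2 hT0) (hcont.pow 2).continuousOn
  have hm : 0 < u x ^ 2 := pow_pos (hpos x) 2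
  set k := max c (-T / u x ^ 2)
  have hkc : c ≤ k := le_max_left _ _
  have hkT : -T / u x ^ 2 ≤ k := le_max_right _ _
  have hk : 0 ≤ k := (div_nonneg (neg_nonneg.2 hT0) hm.le).trans hkT
  refine ⟨k, fun t => ?_⟩
  rcases le_total t T with htT | hTt
  · nlinarith [(hT t htT).1, sq_nonneg (u t)]
  rcases le_total t 0 with ht0 | ht0
  · have hmin : u x ^ 2 ≤ u t ^ 2 := hx ⟨hTt, ht0⟩
    calc 0 ≤ t + -T / u x ^ 2 * u x ^ 2 := by rw [div_mul_cancel₀ _ hm.ne']; linarith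
      _ ≤ t + k * u t ^ 2 := by gcongr
  · positivity

theorem two_notMem_admissibleCoeffs {u u' : ℝ → ℝ} (hu : ∀ t, HasDerivAt u (u' t) t)
    (hode : ∀ t, HasDerivAt u' (t * u t + 2 * u t ^ 3) t)
    (hsq : Tendsto (fun t => u t ^ 2 / t) atBot (𝓝 (-1 / 2))) : 2 ∉ admissibleCoeffs u := by
  intro hw_nonneg
  set w : ℝ → ℝ := fun t => t + 2 * u t ^ 2
  set w' : ℝ → ℝ := fun t => 1 + 4 * (u t * u' t)
  have hw : ∀ t, HasDerivAt w (w' t) t := fun t =>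
    ((hasDerivAt_id t).add (((hu t).pow 2).const_mul 2)).congr_deriv (by simp only [w']; ring)
  have hw' : ∀ t, HasDerivAt w' (4 * u' t ^ 2 + 4 * u t ^ 2 * w t) t := fun t =>
    ((((hu t).mul (hode t)).const_mul 4).const_add 1).congr_deriv (by simp only [w]; ring)
  have hmono : Monotone w' :=
    monotone_of_hasDerivAt_nonneg hw' fun t => by have := hw_nonneg t; positivity
  have hw_div : Tendsto (fun t => w t / t) atBot (𝓝 0) := by
    have hlim := (hsq.const_mul 2).const_add 1
    rw [show (1 : ℝ) + 2 * (-1 / 2) = 0 by norm_num] at hlim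
    refine hlim.congr' ?_
    filter_upwards [eventually_lt_atBot 0] with t ht
    rw [add_div, div_self ht.ne, mul_div_assoc]
  have hw'_nonneg := nonneg_of_monotone_deriv_of_tendsto_div_atBot hw hmono hw_div
  have hcurv : ∀ᶠ t in atBot, 1 / 16 / -t ≤ 4 * u' t ^ 2 + 4 * u t ^ 2 * w t := by
    filter_upwards [eventually_neg_div_four_le_sq_and_sq_le_neg hsq,
      eventually_le_atBot (-(2 * w 0 + 1))] with t ⟨_, hut⟩ ht
    have hw0 : 0 ≤ w 0 := hw_nonneg 0
    have hslope : w' t * -t ≤ w 0 := by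
      linarith [add_mul_sub_le_of_monotone_deriv hw hmono t 0, hw_nonneg t]
    have hw't : w' t ≤ 1 / 2 := by nlinarith
    have huu' : 1 / 64 ≤ u t ^ 2 * u' t ^ 2 := by
      simp only [w'] at hw't
      nlinarith
    rw [div_le_iff₀ (by linarith)]
    nlinarith [mul_nonneg (sq_nonneg (u t)) (hw_nonneg t), sq_nonneg (u' t)]
  obtain ⟨t, ht⟩ :=
    ((tendsto_atBot_of_div_neg_le_deriv (by norm_num) hw' hcurv).eventually_lt_atBot 0).exists
  linarith [hw'_nonneg t]

theorem stmt4_general (u u' : ℝ → ℝ)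
    (hu : ∀ t, HasDerivAt u (u' t) t)
    (huODE : ∀ t, HasDerivAt u' (t * u t + 2 * (u t) ^ 3) t)
    (hupos : ∀ t, 0 < u t)
    (huBot : Tendsto (fun t => u t / Real.sqrt (-t / 2)) atBot (nhds 1)) :
    ({k : ℝ | ∀ t : ℝ, 0 ≤ t + k * (u t) ^ 2}).Nonempty ∧
    (∀ k ∈ {k : ℝ | ∀ t : ℝ, 0 ≤ t + k * (u t) ^ 2}, 2 ≤ k) ∧
    ∃ k₀ : ℝ, IsLeast {k : ℝ | ∀ t : ℝ, 0 ≤ t + k * (u t) ^ 2} k₀ ∧ 2 < k₀ := by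
  have hsq := tendsto_sq_div_atBot_of_tendsto_div_sqrt huBot
  have hcont : Continuous u := continuous_iff_continuousAt.2 fun t => (hu t).continuousAt
  have hne : (admissibleCoeffs u).Nonempty :=
    admissibleCoeffs_nonempty (c := 4) hcont hupos
      ((eventually_neg_div_four_le_sq_and_sq_le_neg hsq).mono fun t ht => by linarith [ht.1])
  have hlb : ∀ k ∈ admissibleCoeffs u, 2 ≤ k := fun _ => two_le_of_mem_admissibleCoeffs hsq
  have hleast := (isClosed_admissibleCoeffs u).isLeast_csInf hne ⟨2, hlb⟩
  refine ⟨hne, hlb, _, hleast, (hlb _ hleast.1).lt_of_ne fun h => ?_⟩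
  exact two_notMem_admissibleCoeffs hu huODE hsq (h ▸ hleast.1)

/-- For the Hastings–McLeod solution `u` of Painlevé II, the set
`{k : t + k·u(t)² ≥ 0 for all t}` is nonempty, bounded below by 2, and has a
minimum `k₀ > 2`. -/
theorem stmt4 (u u' Ai : ℝ → ℝ)
    (hu : ∀ t, HasDerivAt u (u' t) t)
    (huODE : ∀ t, HasDerivAt u' (t * u t + 2 * (u t) ^ 3) t)
    (hupos : ∀ t, 0 < u t)
    (hAi : Tendsto (fun t => Ai t /
        ((2 * Real.sqrt π)⁻¹ * t ^ (-(1 : ℝ) / 4) * Real.exp (-(2 / 3) * t ^ ((3 : ℝ) / 2))))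
      atTop (nhds 1))
    (huTop : Tendsto (fun t => u t / Ai t) atTop (nhds 1))
    (huBot : Tendsto (fun t => u t / Real.sqrt (-t / 2)) atBot (nhds 1)) :
    ({k : ℝ | ∀ t : ℝ, 0 ≤ t + k * (u t) ^ 2}).Nonempty ∧
    (∀ k ∈ {k : ℝ | ∀ t : ℝ, 0 ≤ t + k * (u t) ^ 2}, 2 ≤ k) ∧
    ∃ k₀ : ℝ, IsLeast {k : ℝ | ∀ t : ℝ, 0 ≤ t + k * (u t) ^ 2} k₀ ∧ 2 < k₀ :=
  stmt4_general u u' hu huODE hupos huBot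
end

section
/- Let M be a real 2×2 matrix with entries m_{ij}, and let a > 0, c > 0, b ∈ ℝ with Δ := b² − 4ac < 0. For a nonzero vector V = (x,y) define |V|² = ax² + bxy + cy². Then the extreme values 𝓜 of the ratio |MV|²/|V|² over nonzero V satisfy the quadratic equation Δ·𝓜² + 2δ·𝓜 + Δ·D² = 0, where D = det M and δ = −b²(m₁₁m₂₂ + m₁₂m₂₁) − 2b(a·m₁₂ − c·m₂₁)(m₁₁ − m₂₂) + 2a²m₁₂² + 2c²m₂₁² + 2ac(m₁₁² + m₂₂²). -/
/-!
Write `Q` for the form `|V|²` and `N` for `V ↦ |MV|²`, again a binary quadratic form. The ratio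
`N/Q` is invariant under scaling, so its values are those on the unit circle, a compact set:
the minimum and the maximum exist. If `𝓜` is one of them, the form `N - 𝓜 Q` is semidefinite
and vanishes at the extremal vector, so its discriminant is zero. That discriminant is a
quadratic polynomial in `𝓜`, and it is exactly `Δ 𝓜² + 2δ 𝓜 + Δ D²`.
-/

/-- The set of values of the ratio `|MV|²/|V|²` over nonzero vectors `V`, where
`|V|² = ax² + bxy + cy²` and `M` has entries `m11, m12, m21, m22`. -/
def ratioSet (a b c m11 m12 m21 m22 : ℝ) : Set ℝ :=
  {R : ℝ | ∃ x y : ℝ, (x, y) ≠ (0, 0) ∧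
    R = (a * (m11 * x + m12 * y) ^ 2 + b * (m11 * x + m12 * y) * (m21 * x + m22 * y)
          + c * (m21 * x + m22 * y) ^ 2) / (a * x ^ 2 + b * x * y + c * y ^ 2)}

open Set Metric

section ScaleInvariant

variable {E : Type*} [NormedAddCommGroup E] [NormedSpace ℝ E]

theorem image_sphere_eq_image_compl_zero {g : E → ℝ}
    (hg : ∀ (t : ℝ) v, 0 < t → g (t • v) = g v) : g '' sphere 0 1 = g '' {0}ᶜ := by
  refine Subset.antisymm (image_mono fun v hv => ne_zero_of_mem_unit_sphere ⟨v, hv⟩) ?_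
  rintro _ ⟨v, hv, rfl⟩
  exact ⟨‖v‖⁻¹ • v, by simpa using norm_smul_inv_norm (𝕜 := ℝ) hv, hg _ _ (by positivity)⟩

theorem exists_isLeast_and_isGreatest_image_compl_zero [ProperSpace E] [Nontrivial E]
    {g : E → ℝ} (hcont : ContinuousOn g {0}ᶜ) (hg : ∀ (t : ℝ) v, 0 < t → g (t • v) = g v) :
    (∃ m, IsLeast (g '' {0}ᶜ) m) ∧ ∃ M, IsGreatest (g '' {0}ᶜ) M := by
  rw [← image_sphere_eq_image_compl_zero hg]
  have hcompact : IsCompact (g '' sphere 0 1) := (isCompact_sphere 0 1).image_of_continuousOn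
    (hcont.mono fun v hv => ne_zero_of_mem_unit_sphere ⟨v, hv⟩)
  have hne : (g '' sphere (0 : E) 1).Nonempty :=
    (NormedSpace.sphere_nonempty.mpr zero_le_one).image g
  exact ⟨hcompact.exists_isLeast hne, hcompact.exists_isGreatest hne⟩

end ScaleInvariant

def binForm (α β γ : ℝ) (v : ℝ × ℝ) : ℝ := α * v.1 ^ 2 + β * v.1 * v.2 + γ * v.2 ^ 2

namespace binForm

variable {α β γ : ℝ}

theorem zero_apply : binForm α β γ 0 = 0 := by simp [binForm]

theorem smul_apply (t : ℝ) (v : ℝ × ℝ) : binForm α β γ (t • v) = t ^ 2 * binForm α β γ v := by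
  simp only [binForm, Prod.smul_fst, Prod.smul_snd, smul_eq_mul]; ring

theorem sub_smul_apply (α' β' γ' μ : ℝ) (v : ℝ × ℝ) :
    binForm (α' - μ * α) (β' - μ * β) (γ' - μ * γ) v =
      binForm α' β' γ' v - μ * binForm α β γ v := by
  simp only [binForm]; ring

theorem neg_apply (v : ℝ × ℝ) : binForm (-α) (-β) (-γ) v = -binForm α β γ v := by
  simp only [binForm]; ring

@[fun_prop]
theorem continuous : Continuous (binForm α β γ) := by
  unfold binForm; fun_prop

theorem pos (hα : 0 < α) (hΔ : discrim α β γ < 0) {v : ℝ × ℝ} (hv : v ≠ 0) :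
    0 < binForm α β γ v := by
  obtain ⟨x, y⟩ := v
  rcases eq_or_ne y 0 with rfl | hy
  · have hx : x ≠ 0 := fun hx => hv (by simp [hx])
    have hx0 : binForm α β γ (x, 0) = α * x ^ 2 := by simp [binForm]
    rw [hx0]
    positivity
  have hsq : 4 * α * binForm α β γ (x, y) = (2 * α * x + β * y) ^ 2 - discrim α β γ * y ^ 2 := by
    simp only [binForm, discrim]; ring
  have h4 : 0 < 4 * α * binForm α β γ (x, y) := by
    rw [hsq]
    have hy2 : 0 < y ^ 2 := by positivity
    linarith [sq_nonneg (2 * α * x + β * y), mul_pos (neg_pos.mpr hΔ) hy2]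
  exact pos_of_mul_pos_right h4 (by positivity)

theorem apply_linear (p q r s : ℝ) (v : ℝ × ℝ) :
    binForm α β γ (p * v.1 + q * v.2, r * v.1 + s * v.2) =
      binForm (α * p ^ 2 + β * p * r + γ * r ^ 2)
        (2 * α * p * q + β * (p * s + q * r) + 2 * γ * r * s)
        (α * q ^ 2 + β * q * s + γ * s ^ 2) v := by
  simp only [binForm]; ring

theorem discrim_eq_zero_of_nonneg (hnonneg : ∀ v, 0 ≤ binForm α β γ v) {v₀ : ℝ × ℝ}
    (hv₀ : v₀ ≠ 0) (hzero : binForm α β γ v₀ = 0) : discrim α β γ = 0 := by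
  refine le_antisymm (discrim_le_zero fun x => ?_) ?_
  · simpa [binForm, sq, mul_assoc] using hnonneg (x, 1)
  obtain ⟨x, y⟩ := v₀
  rcases eq_or_ne y 0 with rfl | hy
  · have hx : x ≠ 0 := fun hx => hv₀ (by simp [hx])
    have hα : α = 0 := by simpa [binForm, hx] using hzero
    simp [discrim, hα, sq_nonneg]
  · have hroot : α * ((x / y) * (x / y)) + β * (x / y) + γ = 0 := by
      rw [← mul_eq_zero_iff_right (pow_ne_zero 2 hy), ← hzero]
      simp only [binForm]; field_simp
    rw [discrim_eq_sq_of_quadratic_eq_zero hroot]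
    exact sq_nonneg _

theorem discrim_eq_zero_of_nonpos (hnonpos : ∀ v, binForm α β γ v ≤ 0) {v₀ : ℝ × ℝ}
    (hv₀ : v₀ ≠ 0) (hzero : binForm α β γ v₀ = 0) : discrim α β γ = 0 := by
  rw [← discrim_neg]
  refine discrim_eq_zero_of_nonneg (fun v => ?_) hv₀ (by rw [neg_apply, hzero, neg_zero])
  rw [neg_apply, neg_nonneg]
  exact hnonpos v

theorem sub_smul_apply_eq_zero {α' β' γ' μ : ℝ} {v : ℝ × ℝ} (hv : binForm α β γ v ≠ 0)
    (hμ : binForm α' β' γ' v / binForm α β γ v = μ) :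
    binForm (α' - μ * α) (β' - μ * β) (γ' - μ * γ) v = 0 := by
  rw [sub_smul_apply, ← hμ, div_mul_cancel₀ _ hv, sub_self]

end binForm

def binFormRatioSet (α β γ α' β' γ' : ℝ) : Set ℝ :=
  (fun v => binForm α' β' γ' v / binForm α β γ v) '' {0}ᶜ

namespace binFormRatioSet

variable {α β γ α' β' γ' μ : ℝ}

theorem exists_isLeast_and_isGreatest (hα : 0 < α) (hΔ : discrim α β γ < 0) :
    (∃ m, IsLeast (binFormRatioSet α β γ α' β' γ') m) ∧
      ∃ M, IsGreatest (binFormRatioSet α β γ α' β' γ') M := by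
  refine exists_isLeast_and_isGreatest_image_compl_zero ?_ fun t v ht => ?_
  · exact ContinuousOn.div (by fun_prop) (by fun_prop) fun v hv => (binForm.pos hα hΔ hv).ne'
  · simp only [binForm.smul_apply, mul_div_mul_left _ _ (pow_ne_zero 2 ht.ne')]

theorem discrim_sub_smul_eq_zero_of_isLeast (hα : 0 < α) (hΔ : discrim α β γ < 0)
    (h : IsLeast (binFormRatioSet α β γ α' β' γ') μ) :
    discrim (α' - μ * α) (β' - μ * β) (γ' - μ * γ) = 0 := by
  obtain ⟨⟨v₀, hv₀, hμ⟩, hlower⟩ := h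
  refine binForm.discrim_eq_zero_of_nonneg (fun v => ?_) hv₀
    (binForm.sub_smul_apply_eq_zero (binForm.pos hα hΔ hv₀).ne' hμ)
  rw [binForm.sub_smul_apply, sub_nonneg]
  rcases eq_or_ne v 0 with rfl | hv
  · simp [binForm.zero_apply]
  · exact (le_div_iff₀ (binForm.pos hα hΔ hv)).mp (hlower ⟨v, hv, rfl⟩)

theorem discrim_sub_smul_eq_zero_of_isGreatest (hα : 0 < α) (hΔ : discrim α β γ < 0)
    (h : IsGreatest (binFormRatioSet α β γ α' β' γ') μ) :
    discrim (α' - μ * α) (β' - μ * β) (γ' - μ * γ) = 0 := by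
  obtain ⟨⟨v₀, hv₀, hμ⟩, hupper⟩ := h
  refine binForm.discrim_eq_zero_of_nonpos (fun v => ?_) hv₀
    (binForm.sub_smul_apply_eq_zero (binForm.pos hα hΔ hv₀).ne' hμ)
  rw [binForm.sub_smul_apply, sub_nonpos]
  rcases eq_or_ne v 0 with rfl | hv
  · simp [binForm.zero_apply]
  · exact (div_le_iff₀ (binForm.pos hα hΔ hv)).mp (hupper ⟨v, hv, rfl⟩)

end binFormRatioSet

theorem ratioSet_eq_binFormRatioSet (a b c m11 m12 m21 m22 : ℝ) :
    ratioSet a b c m11 m12 m21 m22 =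
      binFormRatioSet a b c (a * m11 ^ 2 + b * m11 * m21 + c * m21 ^ 2)
        (2 * a * m11 * m12 + b * (m11 * m22 + m12 * m21) + 2 * c * m21 * m22)
        (a * m12 ^ 2 + b * m12 * m22 + c * m22 ^ 2) := by
  ext R
  simp only [ratioSet, binFormRatioSet, ← binForm.apply_linear, mem_ofPred_eq, mem_image,
    Prod.exists, mem_compl_singleton_iff, Prod.mk_zero_zero]
  exact exists₂_congr fun x y => and_congr_right fun _ => eq_comm

theorem discrim_pencil (a b c m11 m12 m21 m22 μ : ℝ) :
    discrim (a * m11 ^ 2 + b * m11 * m21 + c * m21 ^ 2 - μ * a)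
        (2 * a * m11 * m12 + b * (m11 * m22 + m12 * m21) + 2 * c * m21 * m22 - μ * b)
        (a * m12 ^ 2 + b * m12 * m22 + c * m22 ^ 2 - μ * c) =
      (b ^ 2 - 4 * a * c) * μ ^ 2
        + 2 * (-b ^ 2 * (m11 * m22 + m12 * m21)
            - 2 * b * (a * m12 - c * m21) * (m11 - m22)
            + 2 * a ^ 2 * m12 ^ 2 + 2 * c ^ 2 * m21 ^ 2
            + 2 * a * c * (m11 ^ 2 + m22 ^ 2)) * μ
        + (b ^ 2 - 4 * a * c) * (m11 * m22 - m12 * m21) ^ 2 := by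
  simp only [discrim]; ring

theorem stmt8_general (a b c m11 m12 m21 m22 : ℝ)
    (ha : 0 < a) (hΔ : b ^ 2 - 4 * a * c < 0) :
    ∃ M1 M2 : ℝ,
      IsLeast (ratioSet a b c m11 m12 m21 m22) M1 ∧
      IsGreatest (ratioSet a b c m11 m12 m21 m22) M2 ∧
      (b ^ 2 - 4 * a * c) * M1 ^ 2
        + 2 * (-b ^ 2 * (m11 * m22 + m12 * m21)
            - 2 * b * (a * m12 - c * m21) * (m11 - m22)
            + 2 * a ^ 2 * m12 ^ 2 + 2 * c ^ 2 * m21 ^ 2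
            + 2 * a * c * (m11 ^ 2 + m22 ^ 2)) * M1
        + (b ^ 2 - 4 * a * c) * (m11 * m22 - m12 * m21) ^ 2 = 0 ∧
      (b ^ 2 - 4 * a * c) * M2 ^ 2
        + 2 * (-b ^ 2 * (m11 * m22 + m12 * m21)
            - 2 * b * (a * m12 - c * m21) * (m11 - m22)
            + 2 * a ^ 2 * m12 ^ 2 + 2 * c ^ 2 * m21 ^ 2
            + 2 * a * c * (m11 ^ 2 + m22 ^ 2)) * M2
        + (b ^ 2 - 4 * a * c) * (m11 * m22 - m12 * m21) ^ 2 = 0 := by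
  rw [ratioSet_eq_binFormRatioSet]
  obtain ⟨⟨M1, hM1⟩, M2, hM2⟩ := binFormRatioSet.exists_isLeast_and_isGreatest ha hΔ
  refine ⟨M1, M2, hM1, hM2, ?_, ?_⟩ <;> rw [← discrim_pencil]
  exacts [binFormRatioSet.discrim_sub_smul_eq_zero_of_isLeast ha hΔ hM1,
    binFormRatioSet.discrim_sub_smul_eq_zero_of_isGreatest ha hΔ hM2]

/-- For a positive definite form `|V|² = ax² + bxy + cy²` (`a, c > 0`,
`Δ = b² − 4ac < 0`) and a 2×2 matrix `M`, the minimum and maximum of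
`|MV|²/|V|²` over nonzero `V` exist and both satisfy the quadratic
`Δ·𝓜² + 2δ·𝓜 + Δ·D² = 0` with `D = det M` and `δ` as stated. -/
theorem stmt8 (a b c m11 m12 m21 m22 : ℝ)
    (ha : 0 < a) (hc : 0 < c) (hΔ : b ^ 2 - 4 * a * c < 0) :
    ∃ M1 M2 : ℝ,
      IsLeast (ratioSet a b c m11 m12 m21 m22) M1 ∧
      IsGreatest (ratioSet a b c m11 m12 m21 m22) M2 ∧
      (b ^ 2 - 4 * a * c) * M1 ^ 2
        + 2 * (-b ^ 2 * (m11 * m22 + m12 * m21)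
            - 2 * b * (a * m12 - c * m21) * (m11 - m22)
            + 2 * a ^ 2 * m12 ^ 2 + 2 * c ^ 2 * m21 ^ 2
            + 2 * a * c * (m11 ^ 2 + m22 ^ 2)) * M1
        + (b ^ 2 - 4 * a * c) * (m11 * m22 - m12 * m21) ^ 2 = 0 ∧
      (b ^ 2 - 4 * a * c) * M2 ^ 2
        + 2 * (-b ^ 2 * (m11 * m22 + m12 * m21)
            - 2 * b * (a * m12 - c * m21) * (m11 - m22)
            + 2 * a ^ 2 * m12 ^ 2 + 2 * c ^ 2 * m21 ^ 2
            + 2 * a * c * (m11 ^ 2 + m22 ^ 2)) * M2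
        + (b ^ 2 - 4 * a * c) * (m11 * m22 - m12 * m21) ^ 2 = 0 :=
  stmt8_general a b c m11 m12 m21 m22 ha hΔ
end

section
/- Let f₁₁, f₁₂, f₂₁, f₂₂ : [t₀, t₁] → ℝ be continuous and let (x(t), y(t)) be a solution of the linear system x' = f₁₁x + f₁₂y, y' = f₂₁x + f₂₂y with (x(t₀), y(t₀)) ≠ (0,0). Then, with N(t) = √(x(t)² + y(t)²), for t₁ > t₀: ln N(t₁) ≤ ln N(t₀) + (1/2)∫_{t₀}^{t₁} [f₁₁(s) + f₂₂(s) + √((f₁₁(s)−f₂₂(s))² + (f₁₂(s)+f₂₁(s))²)] ds, and ln N(t₁) ≥ ln N(t₀) + (1/2)∫_{t₀}^{t₁} [f₁₁(s) + f₂₂(s) − √((f₁₁(s)−f₂₂(s))² + (f₁₂(s)+f₂₁(s))²)] ds. -/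
/-!
With `Q = x² + y²` one has `Q' = 2 q(x, y)`, where `q` is the quadratic form of `F`, i.e. of its
symmetric part, whose eigenvalues are `(tr F ± R) / 2` with `R = √((f₁₁ - f₂₂)² + (f₁₂ + f₂₁)²)`.
Hence `(tr F - R) Q ≤ Q' ≤ (tr F + R) Q`. These integrate, Gronwall style, through the monotonicity
of `Q · exp (-∫ φ)`, which needs no prior knowledge that `Q` does not vanish.
-/

open Real Set

theorem abs_two_mul_quadratic_sub_le (a b c u v : ℝ) :
    |2 * (a * u ^ 2 + b * (u * v) + c * v ^ 2) - (a + c) * (u ^ 2 + v ^ 2)| ≤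
      √((a - c) ^ 2 + b ^ 2) * (u ^ 2 + v ^ 2) := by
  have hR : √((a - c) ^ 2 + b ^ 2) ^ 2 = (a - c) ^ 2 + b ^ 2 := sq_sqrt (by positivity)
  refine abs_le_of_sq_le_sq ?_ (by positivity)
  rw [mul_pow, hR]
  -- Cauchy–Schwarz for `(a - c, b)` and `(u² - v², 2uv)`, whose norm is `u² + v²`.
  nlinarith [sq_nonneg ((a - c) * (2 * u * v) - b * (u ^ 2 - v ^ 2))]

theorem hasDerivAt_integral_of_continuousOn_Icc {φ : ℝ → ℝ} {a b t : ℝ}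
    (hφ : ContinuousOn φ (Icc a b)) (ht : t ∈ Ioo a b) :
    HasDerivAt (fun u => ∫ s in a..u, φ s) (φ t) t :=
  intervalIntegral.integral_hasDerivAt_right
    ((hφ.mono (Icc_subset_Icc le_rfl ht.2.le)).intervalIntegrable_of_Icc ht.1.le)
    ((hφ.mono Ioo_subset_Icc_self).stronglyMeasurableAtFilter isOpen_Ioo t ht)
    (hφ.continuousAt (Icc_mem_nhds ht.1 ht.2))

theorem continuousOn_integral_of_continuousOn_Icc {φ : ℝ → ℝ} {a b : ℝ} (hab : a ≤ b)
    (hφ : ContinuousOn φ (Icc a b)) :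
    ContinuousOn (fun u => ∫ s in a..u, φ s) (Icc a b) := by
  rw [← uIcc_of_le hab] at hφ ⊢
  exact intervalIntegral.continuousOn_primitive_interval hφ.integrableOn_uIcc

theorem le_mul_exp_sub_of_hasDerivAt_le {Q Q' Φ φ : ℝ → ℝ} {a b : ℝ} (hab : a ≤ b)
    (hQc : ContinuousOn Q (Icc a b)) (hΦc : ContinuousOn Φ (Icc a b))
    (hQ : ∀ t ∈ Ioo a b, HasDerivAt Q (Q' t) t) (hΦ : ∀ t ∈ Ioo a b, HasDerivAt Φ (φ t) t)
    (hle : ∀ t ∈ Ioo a b, Q' t ≤ φ t * Q t) :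
    Q b ≤ Q a * exp (Φ b - Φ a) := by
  have hanti : AntitoneOn (fun t => Q t * exp (-Φ t)) (Icc a b) := by
    refine antitoneOn_of_hasDerivWithinAt_nonpos (convex_Icc a b)
      (hQc.mul (hΦc.neg.rexp)) (f' := fun t => (Q' t - φ t * Q t) * exp (-Φ t)) ?_ ?_
    · rw [interior_Icc]
      intro t ht
      exact (((hQ t ht).mul (hΦ t ht).neg.exp).congr_deriv
        (by simp only [Pi.neg_apply]; ring)).hasDerivWithinAt
    · rw [interior_Icc]
      intro t ht
      exact mul_nonpos_of_nonpos_of_nonneg (sub_nonpos.2 (hle t ht)) (exp_nonneg _)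
  have := hanti (left_mem_Icc.2 hab) (right_mem_Icc.2 hab) hab
  calc Q b = Q b * exp (-Φ b) * exp (Φ b) := by rw [mul_assoc, ← exp_add]; simp
    _ ≤ Q a * exp (-Φ a) * exp (Φ b) := by gcongr
    _ = Q a * exp (Φ b - Φ a) := by rw [mul_assoc, ← exp_add]; ring_nf

theorem le_mul_exp_integral_of_hasDerivAt_le {Q Q' φ : ℝ → ℝ} {a b : ℝ} (hab : a ≤ b)
    (hφ : ContinuousOn φ (Icc a b)) (hQc : ContinuousOn Q (Icc a b))
    (hQ : ∀ t ∈ Ioo a b, HasDerivAt Q (Q' t) t) (hle : ∀ t ∈ Ioo a b, Q' t ≤ φ t * Q t) :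
    Q b ≤ Q a * exp (∫ s in a..b, φ s) := by
  simpa using le_mul_exp_sub_of_hasDerivAt_le hab hQc
    (continuousOn_integral_of_continuousOn_Icc hab hφ) hQ
    (fun t ht => hasDerivAt_integral_of_continuousOn_Icc hφ ht) hle

theorem mul_exp_integral_le_of_le_hasDerivAt {Q Q' φ : ℝ → ℝ} {a b : ℝ} (hab : a ≤ b)
    (hφ : ContinuousOn φ (Icc a b)) (hQc : ContinuousOn Q (Icc a b))
    (hQ : ∀ t ∈ Ioo a b, HasDerivAt Q (Q' t) t) (hle : ∀ t ∈ Ioo a b, φ t * Q t ≤ Q' t) :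
    Q a * exp (∫ s in a..b, φ s) ≤ Q b := by
  simpa using le_mul_exp_integral_of_hasDerivAt_le hab hφ hQc.neg (fun t ht => (hQ t ht).neg)
    (fun t ht => by simpa using hle t ht)

theorem log_sqrt_le_of_le_mul_exp {A B I : ℝ} (hB : 0 < B) (h : B ≤ A * exp I) :
    log √B ≤ log √A + 1 / 2 * I := by
  have hA : 0 < A := pos_of_mul_pos_left (hB.trans_le h) (exp_nonneg I)
  have := log_le_log hB h
  rw [log_mul hA.ne' (exp_ne_zero I), log_exp] at this
  rw [log_sqrt hB.le, log_sqrt hA.le]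
  linarith

theorem log_sqrt_add_le_of_mul_exp_le {A B I : ℝ} (hA : 0 < A) (h : A * exp I ≤ B) :
    log √A + 1 / 2 * I ≤ log √B := by
  have hAI : 0 < A * exp I := by positivity
  have := log_le_log hAI h
  rw [log_mul hA.ne' (exp_ne_zero I), log_exp] at this
  rw [log_sqrt (hAI.trans_le h).le, log_sqrt hA.le]
  linarith

/-- Growth-rate bounds for the Euclidean norm of a solution of a 2×2
time-dependent linear ODE system. -/
theorem stmt9 (t₀ t₁ : ℝ) (h : t₀ < t₁)
    (f11 f12 f21 f22 x y : ℝ → ℝ)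
    (hc11 : ContinuousOn f11 (Set.Icc t₀ t₁))
    (hc12 : ContinuousOn f12 (Set.Icc t₀ t₁))
    (hc21 : ContinuousOn f21 (Set.Icc t₀ t₁))
    (hc22 : ContinuousOn f22 (Set.Icc t₀ t₁))
    (hx : ∀ t ∈ Set.Icc t₀ t₁, HasDerivAt x (f11 t * x t + f12 t * y t) t)
    (hy : ∀ t ∈ Set.Icc t₀ t₁, HasDerivAt y (f21 t * x t + f22 t * y t) t)
    (hnz : (x t₀, y t₀) ≠ (0, 0)) :
    Real.log (Real.sqrt ((x t₁) ^ 2 + (y t₁) ^ 2)) ≤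
      Real.log (Real.sqrt ((x t₀) ^ 2 + (y t₀) ^ 2)) +
        (1 / 2) * ∫ s in t₀..t₁,
          (f11 s + f22 s + Real.sqrt ((f11 s - f22 s) ^ 2 + (f12 s + f21 s) ^ 2))
    ∧
    Real.log (Real.sqrt ((x t₀) ^ 2 + (y t₀) ^ 2)) +
        (1 / 2) * ∫ s in t₀..t₁,
          (f11 s + f22 s - Real.sqrt ((f11 s - f22 s) ^ 2 + (f12 s + f21 s) ^ 2)) ≤
      Real.log (Real.sqrt ((x t₁) ^ 2 + (y t₁) ^ 2)) := by
  have hQ : ∀ t ∈ Ioo t₀ t₁, HasDerivAt (fun u => x u ^ 2 + y u ^ 2)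
      (2 * (f11 t * x t ^ 2 + (f12 t + f21 t) * (x t * y t) + f22 t * y t ^ 2)) t :=
    fun t ht => (((hx t (Ioo_subset_Icc_self ht)).pow 2).add
      ((hy t (Ioo_subset_Icc_self ht)).pow 2)).congr_deriv (by push_cast; ring)
  have hQc : ContinuousOn (fun u => x u ^ 2 + y u ^ 2) (Icc t₀ t₁) := fun t ht =>
    (((hx t ht).continuousAt.pow 2).add ((hy t ht).continuousAt.pow 2)).continuousWithinAt
  set R := fun s => √((f11 s - f22 s) ^ 2 + (f12 s + f21 s) ^ 2)
  have hRc : ContinuousOn R (Icc t₀ t₁) :=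
    (((hc11.sub hc22).pow 2).add ((hc12.add hc21).pow 2)).sqrt
  have hQ₀ : 0 < x t₀ ^ 2 + y t₀ ^ 2 := by
    by_contra! hle
    exact hnz (Prod.ext (by nlinarith) (by nlinarith))
  have hbound t :=
    abs_le.1 (abs_two_mul_quadratic_sub_le (f11 t) (f12 t + f21 t) (f22 t) (x t) (y t))
  have hup := le_mul_exp_integral_of_hasDerivAt_le (φ := fun s => f11 s + f22 s + R s) h.le
    ((hc11.add hc22).add hRc) hQc hQ (fun t _ => by linarith [(hbound t).2])
  have hlo := mul_exp_integral_le_of_le_hasDerivAt (φ := fun s => f11 s + f22 s - R s) h.le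
    ((hc11.add hc22).sub hRc) hQc hQ (fun t _ => by linarith [(hbound t).1])
  have hQ₁ : 0 < x t₁ ^ 2 + y t₁ ^ 2 := lt_of_lt_of_le (by positivity) hlo
  exact ⟨log_sqrt_le_of_le_mul_exp hQ₁ hup, log_sqrt_add_le_of_mul_exp_le hQ₀ hlo⟩
end

section
/- Let u be the Hastings–McLeod solution of Painlevé II (u > 0 everywhere) and suppose (φ₁, φ₂, φ₀) solves φ₁' = −(2/3)φ₂, φ₂' = −(2/3)u·φ₀ − (1/6)(t + 2u²)·φ₁, φ₀' = (1/3)u'·φ₁ − (2/3)u·φ₂. Let k₀ > 2 be the minimal constant with t + k₀·u(t)² ≥ 0 for all t, and assume k₀ < 10/3. If at some point t₀ we have φ₁(t₀) > 0, φ₂(t₀) > 0, φ₀(t₀) > 0 and (2/3)φ₀(t₀) − ((k₀−2)/6)·u(t₀)·φ₁(t₀) > 0, then φ₁, φ₂, φ₀ and the function (2/3)φ₀ − ((k₀−2)/6)·u·φ₁ are all strictly positive and monotonically decreasing on (−∞, t₀]. -/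
/-!
Since `u > 0` and `t + k₀ u² ≥ 0`, the Hastings–McLeod solution is strictly decreasing. Indeed, at a
point where `u' ≥ 0` and `t + 2u² ≥ 0` the solution would stay increasing with `u'' ≥ 2u³` for
`t ≥ 0`, and the energy `u'² - u⁴` is then nondecreasing, so `1 / u` reaches zero in finite time.
At a point `z` where `u' ≥ 0` and `z + 2u² < 0`, the bound `t + k₀ u² ≥ 0` makes `u` larger than
`u z` far to the left, so `u` attains its minimum on such an interval at some `c` with `u' c ≥ 0`;
there `c + 2u² < 0` again, i.e. `u'' c < 0`, and `u` increases into `c`, a contradiction.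

With `u' < 0`, the derivatives of `φ₁, φ₂, φ₀` and `ψ = (2/3)φ₀ - ((k₀-2)/6)uφ₁` are negative
wherever all four are positive, because `φ₂' = -uψ - (t + k₀u²)φ₁/6` and
`ψ' = ((10 - 3k₀)/18)u'φ₁ - ((6 - k₀)/9)uφ₂`. Hence positivity propagates from `t₀` to the left.
-/

open Set Topology

section Calculus

variable {f f' : ℝ → ℝ} {D : Set ℝ} {x d : ℝ}

lemma monotoneOn_of_hasDerivAt_of_nonneg (hD : Convex ℝ D)
    (hf : ∀ x ∈ D, HasDerivAt f (f' x) x) (hf' : ∀ x ∈ interior D, 0 ≤ f' x) :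
    MonotoneOn f D :=
  monotoneOn_of_hasDerivWithinAt_nonneg hD (fun x hx ↦ (hf x hx).continuousAt.continuousWithinAt)
    (fun x hx ↦ (hf x (interior_subset hx)).hasDerivWithinAt) hf'

lemma antitoneOn_of_hasDerivAt_of_nonpos (hD : Convex ℝ D)
    (hf : ∀ x ∈ D, HasDerivAt f (f' x) x) (hf' : ∀ x ∈ interior D, f' x ≤ 0) :
    AntitoneOn f D :=
  antitoneOn_of_hasDerivWithinAt_nonpos hD (fun x hx ↦ (hf x hx).continuousAt.continuousWithinAt)
    (fun x hx ↦ (hf x (interior_subset hx)).hasDerivWithinAt) hf'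

lemma strictMonoOn_of_hasDerivAt_of_pos (hD : Convex ℝ D)
    (hf : ∀ x ∈ D, HasDerivAt f (f' x) x) (hf' : ∀ x ∈ interior D, 0 < f' x) :
    StrictMonoOn f D :=
  strictMonoOn_of_hasDerivWithinAt_pos hD (fun x hx ↦ (hf x hx).continuousAt.continuousWithinAt)
    (fun x hx ↦ (hf x (interior_subset hx)).hasDerivWithinAt) hf'

lemma strictAntiOn_of_hasDerivAt_of_neg (hD : Convex ℝ D)
    (hf : ∀ x ∈ D, HasDerivAt f (f' x) x) (hf' : ∀ x ∈ interior D, f' x < 0) :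
    StrictAntiOn f D :=
  strictAntiOn_of_hasDerivWithinAt_neg hD (fun x hx ↦ (hf x hx).continuousAt.continuousWithinAt)
    (fun x hx ↦ (hf x (interior_subset hx)).hasDerivWithinAt) hf'

lemma le_of_hasDerivAt_nonneg_Ioi (hf : ∀ x ≥ d, HasDerivAt f (f' x) x)
    (hf' : ∀ x > d, 0 ≤ f' x) (hx : d ≤ x) : f d ≤ f x :=
  monotoneOn_of_hasDerivAt_of_nonneg (convex_Ici d) hf
    (fun y hy ↦ hf' y (by rwa [interior_Ici] at hy)) self_mem_Ici hx hx

lemma HasDerivAt.eventually_nhdsGT_lt (hf : HasDerivAt f d x) (hd : 0 < d) :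
    ∀ᶠ y in 𝓝[>] x, f x < f y := by
  filter_upwards [nhdsGT_le_nhdsNE x ((hasDerivAt_iff_tendsto_slope.1 hf).eventually
    (eventually_gt_nhds hd)), self_mem_nhdsWithin] with y hy hxy
  exact (slope_pos_iff hxy).1 hy

lemma HasDerivAt.eventually_nhdsLT_lt (hf : HasDerivAt f d x) (hd : d < 0) :
    ∀ᶠ y in 𝓝[<] x, f x < f y := by
  filter_upwards [nhdsLT_le_nhdsNE x ((hasDerivAt_iff_tendsto_slope.1 hf.neg).eventually
    (eventually_gt_nhds (neg_pos.2 hd))), self_mem_nhdsWithin] with y hy hyx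
  simpa using (slope_pos_iff_gt hyx).1 hy

end Calculus

theorem pos_of_forall_pos_of_hasDerivAt_nonneg {ι : Type*} [Finite ι] {f f' : ι → ℝ → ℝ}
    {a t : ℝ} (hf : ∀ i x, HasDerivAt (f i) (f' i x) x)
    (hf' : ∀ x, (∀ i, 0 < f i x) → ∀ i, 0 ≤ f' i x) (ha : ∀ i, 0 < f i a) (hat : a ≤ t)
    (i : ι) : 0 < f i t := by
  by_contra! hi
  set S := Icc a t ∩ ⋃ j, {x | f j x ≤ 0}
  have hS : IsClosed S := isClosed_Icc.inter <| isClosed_iUnion_of_finite fun j ↦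
    isClosed_le (continuous_iff_continuousAt.2 fun x ↦ (hf j x).continuousAt) continuous_const
  have hSbdd : BddBelow S := ⟨a, fun x hx ↦ hx.1.1⟩
  have he : sInf S ∈ S := hS.csInf_mem ⟨t, ⟨hat, le_rfl⟩, mem_iUnion.2 ⟨i, hi⟩⟩ hSbdd
  have hbefore : ∀ x ∈ Ico a (sInf S), ∀ j, 0 < f j x := fun x hx j ↦ by
    by_contra! hj
    exact hx.2.not_ge (csInf_le hSbdd ⟨⟨hx.1, hx.2.le.trans he.1.2⟩, mem_iUnion.2 ⟨j, hj⟩⟩)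
  obtain ⟨j, hj⟩ := mem_iUnion.1 he.2
  have hmono : MonotoneOn (f j) (Icc a (sInf S)) :=
    monotoneOn_of_hasDerivAt_of_nonneg (convex_Icc _ _) (fun x _ ↦ hf j x) fun x hx ↦
      hf' x (hbefore x (Ioo_subset_Ico_self (by rwa [interior_Icc] at hx))) j
  exact (ha j).not_ge ((hmono (left_mem_Icc.2 he.1.1) (right_mem_Icc.2 he.1.1) he.1.1).trans hj)

theorem pos_and_strictAntiOn_Iic_of_hasDerivAt_neg {ι : Type*} [Finite ι]
    {f f' : ι → ℝ → ℝ} {b : ℝ} (hf : ∀ i x, HasDerivAt (f i) (f' i x) x)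
    (hf' : ∀ x, (∀ i, 0 < f i x) → ∀ i, f' i x < 0) (hb : ∀ i, 0 < f i b) :
    (∀ t ≤ b, ∀ i, 0 < f i t) ∧ ∀ i, StrictAntiOn (f i) (Iic b) := by
  have hpos : ∀ t ≤ b, ∀ i, 0 < f i t := fun t htb i ↦ by
    simpa using pos_of_forall_pos_of_hasDerivAt_nonneg (f := fun i x ↦ f i (-x))
      (f' := fun i x ↦ -f' i (-x)) (a := -b) (t := -t)
      (fun i x ↦ by simpa [Function.comp_def] using (hf i (-x)).comp x (hasDerivAt_neg' x))
      (fun x hx i ↦ neg_nonneg.2 (hf' (-x) hx i).le) (by simpa) (neg_le_neg htb) i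
  refine ⟨hpos, fun i ↦ strictAntiOn_of_hasDerivAt_of_neg (convex_Iic b) (fun x _ ↦ hf i x)
    fun x hx ↦ hf' x (hpos x ?_) i⟩
  rw [interior_Iic] at hx
  exact hx.le

theorem exists_two_mul_deriv_lt_sq {u u' : ℝ → ℝ} {a : ℝ}
    (hu : ∀ t ≥ a, HasDerivAt u (u' t) t) (hpos : ∀ t ≥ a, 0 < u t) :
    ∃ t ≥ a, 2 * u' t < u t ^ 2 := by
  by_contra! hsq
  -- `1 / u + t / 2` is antitone, which forces `1 / u` to reach zero
  have hanti : AntitoneOn (fun t ↦ (u t)⁻¹ + t / 2) (Ici a) :=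
    antitoneOn_of_hasDerivAt_of_nonpos (convex_Ici a)
      (fun t ht ↦ ((hu t ht).inv (hpos t ht).ne').add ((hasDerivAt_id' t).div_const 2))
      fun t ht ↦ by
        rw [interior_Ici] at ht
        have : 1 / 2 ≤ u' t / u t ^ 2 := by
          rw [le_div_iff₀ (pow_pos (hpos t ht.le) 2)]
          linarith [hsq t ht.le]
        rw [neg_div]
        linarith
  set T := a + 2 * (u a)⁻¹
  have haT : a ≤ T := le_add_of_nonneg_right (by positivity [hpos a le_rfl])
  have := hanti self_mem_Ici haT haT
  have := inv_pos.2 (hpos T haT)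
  simp only [T] at *
  linarith

theorem exists_deriv_nonpos_of_two_mul_cube_le {u u' u'' : ℝ → ℝ} {a : ℝ}
    (hu : ∀ t, HasDerivAt u (u' t) t) (hu' : ∀ t, HasDerivAt u' (u'' t) t) (ha : 0 < u a)
    (hu'' : ∀ t ≥ a, 2 * u t ^ 3 ≤ u'' t) : ∃ t ≥ a, u' t ≤ 0 := by
  by_contra! hu'pos
  have hu_pos : ∀ t ≥ a, 0 < u t := fun t ht ↦
    ha.trans_le (le_of_hasDerivAt_nonneg_Ioi (fun t _ ↦ hu t) (fun t ht ↦ (hu'pos t ht.le).le) ht)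
  have hu'_ge : ∀ t ≥ a, u' a ≤ u' t := fun t ↦ le_of_hasDerivAt_nonneg_Ioi (fun t _ ↦ hu' t)
    fun t ht ↦ by linarith [pow_pos (hu_pos t ht.le) 3, hu'' t ht.le]
  have hlin : ∀ t ≥ a, u a + u' a * (t - a) ≤ u t := fun t ht ↦ by
    have := le_of_hasDerivAt_nonneg_Ioi (f := fun t ↦ u t - u' a * t)
      (fun t _ ↦ ((hu t).sub ((hasDerivAt_id' t).const_mul (u' a))).congr_deriv (by ring))
      (fun t ht ↦ sub_nonneg.2 (hu'_ge t ht.le)) ht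
    linarith
  have henergy : ∀ t ≥ a, u t ^ 4 - u a ^ 4 ≤ u' t ^ 2 := fun t ht ↦ by
    have := le_of_hasDerivAt_nonneg_Ioi (f := fun t ↦ u' t ^ 2 - u t ^ 4)
      (fun t _ ↦ ((hu' t).pow 2).sub ((hu t).pow 4))
      (fun t ht ↦ by
        have := mul_le_mul_of_nonneg_left (hu'' t ht.le) (hu'pos t ht.le).le
        push_cast; nlinarith) ht
    nlinarith [sq_nonneg (u' a)]
  -- once `u` has doubled, the energy bound gives `u ^ 2 ≤ 2 u'`
  set R := a + u a / u' a
  have hR : a ≤ R := le_add_of_nonneg_right (div_pos ha (hu'pos a le_rfl)).le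
  obtain ⟨t, ht, hlt⟩ := exists_two_mul_deriv_lt_sq (a := R) (fun t _ ↦ hu t)
    (fun t ht ↦ hu_pos t (hR.trans ht))
  have h2 : 2 * u a ≤ u t := by
    have := mul_le_mul_of_nonneg_left (sub_le_sub_right ht a) (hu'pos a le_rfl).le
    rw [add_sub_cancel_left, mul_div_cancel₀ _ (hu'pos a le_rfl).ne'] at this
    linarith [hlin t (hR.trans ht)]
  have h4 : 16 * u a ^ 4 ≤ u t ^ 4 := by
    have := pow_le_pow_left₀ (by linarith) h2 4
    linarith
  nlinarith [henergy t (hR.trans ht), hu'pos t (hR.trans ht)]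

namespace PainleveII

variable {u u' : ℝ → ℝ}

lemma hasDerivAt_add_two_mul_sq (hu : ∀ t, HasDerivAt u (u' t) t) (t : ℝ) :
    HasDerivAt (fun t ↦ t + 2 * u t ^ 2) (1 + 4 * u t * u' t) t :=
  ((hasDerivAt_id' t).add (((hu t).pow 2).const_mul 2)).congr_deriv (by push_cast; ring)

theorem not_deriv_pos_and_pos (hu : ∀ t, HasDerivAt u (u' t) t)
    (hu' : ∀ t, HasDerivAt u' (t * u t + 2 * u t ^ 3) t) (hpos : ∀ t, 0 < u t) (a : ℝ) :
    ¬ (0 < u' a ∧ 0 < a + 2 * u a ^ 2) := by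
  rintro ⟨ha, hag⟩
  -- `u'` and `t + 2 u²` stay positive, since `u'' = (t + 2 u²) u` and `(t + 2 u²)' = 1 + 4 u u'`
  have hu'pos : ∀ t ≥ a, 0 < u' t := fun t ht ↦
    pos_of_forall_pos_of_hasDerivAt_nonneg (f := ![u', fun t ↦ t + 2 * u t ^ 2])
      (f' := ![fun t ↦ t * u t + 2 * u t ^ 3, fun t ↦ 1 + 4 * u t * u' t])
      (fun i ↦ by fin_cases i; exacts [hu', hasDerivAt_add_two_mul_sq hu])
      (fun x hx ↦ by
        simp only [Fin.forall_fin_two, Matrix.cons_val_zero, Matrix.cons_val_one] at hx ⊢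
        have := hpos x
        constructor <;> nlinarith)
      (by simp [Fin.forall_fin_two, ha, hag]) ht 0
  obtain ⟨t, ht, ht'⟩ := exists_deriv_nonpos_of_two_mul_cube_le hu hu' (hpos (max a 0))
    fun t ht ↦ by nlinarith [hpos t, le_of_max_le_right ht]
  exact (hu'pos t (le_of_max_le_left ht)).not_ge ht'

theorem add_two_mul_sq_neg_of_deriv_nonneg (hu : ∀ t, HasDerivAt u (u' t) t)
    (hu' : ∀ t, HasDerivAt u' (t * u t + 2 * u t ^ 3) t) (hpos : ∀ t, 0 < u t) {m : ℝ}
    (hm : 0 ≤ u' m) : m + 2 * u m ^ 2 < 0 := by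
  by_contra! hg
  obtain ⟨l, hml : m < l, hl⟩ := mem_nhdsGT_iff_exists_Ioo_subset.1 <|
    (hasDerivAt_add_two_mul_sq hu m).eventually_nhdsGT_lt (by nlinarith [hpos m])
  have hgpos : ∀ x ∈ Ioo m l, 0 < x + 2 * u x ^ 2 := fun x hx ↦ hg.trans_lt (hl hx)
  obtain ⟨t, html⟩ := nonempty_Ioo.2 hml
  have hmono : StrictMonoOn u' (Icc m t) :=
    strictMonoOn_of_hasDerivAt_of_pos (convex_Icc m t) (fun x _ ↦ hu' x) fun x hx ↦ by
      rw [interior_Icc] at hx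
      nlinarith [hgpos x ⟨hx.1, hx.2.trans html.2⟩, hpos x]
  exact not_deriv_pos_and_pos hu hu' hpos t
    ⟨hm.trans_lt (hmono (left_mem_Icc.2 html.1.le) (right_mem_Icc.2 html.1.le) html.1),
      hgpos t html⟩

theorem deriv_neg (hu : ∀ t, HasDerivAt u (u' t) t)
    (hu' : ∀ t, HasDerivAt u' (t * u t + 2 * u t ^ 3) t) (hpos : ∀ t, 0 < u t) {k : ℝ}
    (hk : ∀ t, 0 ≤ t + k * u t ^ 2) (z : ℝ) : u' z < 0 := by
  by_contra! hz
  have hk0 : 0 < k := by nlinarith [hk (-1), hpos (-1)]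
  -- far enough to the left `u` exceeds `u z`, so `u` has a minimum on `[b, z]` away from `b`
  set b := -k * u z ^ 2 - 1 with hb
  have hbz : b < z := by linarith [hk z]
  have hub : u z < u b := by
    have : u z ^ 2 < u b ^ 2 := by nlinarith [hk b]
    nlinarith [hpos b, hpos z]
  obtain ⟨c, hc, hmin⟩ := isCompact_Icc.exists_isMinOn (nonempty_Icc.2 hbz.le)
    fun x _ ↦ (hu x).continuousAt.continuousWithinAt
  have hbc : b < c := hc.1.lt_of_ne <| by
    rintro rfl
    exact (hmin (right_mem_Icc.2 hbz.le)).not_gt hub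
  have hc' : 0 ≤ u' c := by
    rcases hc.2.eq_or_lt with rfl | hcz
    · exact hz
    · exact ((hmin.isLocalMin (Icc_mem_nhds hbc hcz)).hasDerivAt_eq_zero (hu c)).ge
  -- `u'' c < 0`, so `u' > u' c ≥ 0` just left of `c` and `u` increases into `c`
  have hu''c : c * u c + 2 * u c ^ 3 < 0 := by
    nlinarith [add_two_mul_sq_neg_of_deriv_nonneg hu hu' hpos hc', hpos c]
  obtain ⟨l, hlc : l < c, hl⟩ := mem_nhdsLT_iff_exists_Ioo_subset.1 <|
    ((hu' c).eventually_nhdsLT_lt hu''c).and (Ioo_mem_nhdsLT hbc)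
  obtain ⟨s, hslc⟩ := nonempty_Ioo.2 hlc
  have hmono : StrictMonoOn u (Icc s c) :=
    strictMonoOn_of_hasDerivAt_of_pos (convex_Icc s c) (fun x _ ↦ hu x) fun x hx ↦ by
      rw [interior_Icc] at hx
      exact hc'.trans_lt (hl ⟨hslc.1.trans hx.1, hx.2⟩).1
  exact (hmin ⟨(hl hslc).2.1.le, hslc.2.le.trans hc.2⟩).not_gt
    (hmono (left_mem_Icc.2 hslc.2.le) (right_mem_Icc.2 hslc.2.le) hslc.2)

theorem derivs_neg_of_pos {t k x x' p₁ p₂ p₀ : ℝ} (hx : 0 < x) (hx' : x' < 0)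
    (hk : 0 ≤ t + k * x ^ 2) (hk3 : k < 10 / 3) (h₁ : 0 < p₁) (h₂ : 0 < p₂)
    (hψ : 0 < 2 / 3 * p₀ - (k - 2) / 6 * x * p₁) :
    -(2 / 3) * p₂ < 0 ∧ -(2 / 3) * x * p₀ - 1 / 6 * (t + 2 * x ^ 2) * p₁ < 0 ∧
      1 / 3 * x' * p₁ - 2 / 3 * x * p₂ < 0 ∧
      (10 - 3 * k) / 18 * x' * p₁ - (6 - k) / 9 * x * p₂ < 0 := by
  refine ⟨by linarith, ?_, by nlinarith [mul_pos hx h₂, mul_neg_of_neg_of_pos hx' h₁], ?_⟩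
  · have e : -(2 / 3) * x * p₀ - 1 / 6 * (t + 2 * x ^ 2) * p₁ =
        -(x * (2 / 3 * p₀ - (k - 2) / 6 * x * p₁)) - 1 / 6 * ((t + k * x ^ 2) * p₁) := by ring
    rw [e]
    nlinarith [mul_pos hx hψ, mul_nonneg hk h₁.le]
  · have h10 : (0 : ℝ) < 10 - 3 * k := by linarith
    nlinarith [mul_pos h10 (neg_pos.2 (mul_neg_of_neg_of_pos hx' h₁)),
      mul_pos (by linarith : (0 : ℝ) < 6 - k) (mul_pos hx h₂)]

end PainleveII

theorem stmt10_general (u u' φ₁ φ₂ φ₀ : ℝ → ℝ) (k₀ t₀ : ℝ)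
    (hu : ∀ t, HasDerivAt u (u' t) t)
    (huODE : ∀ t, HasDerivAt u' (t * u t + 2 * (u t) ^ 3) t)
    (hupos : ∀ t, 0 < u t)
    (h1 : ∀ t, HasDerivAt φ₁ (-(2 / 3) * φ₂ t) t)
    (h2 : ∀ t, HasDerivAt φ₂ (-(2 / 3) * u t * φ₀ t - (1 / 6) * (t + 2 * (u t) ^ 2) * φ₁ t) t)
    (h0 : ∀ t, HasDerivAt φ₀ ((1 / 3) * u' t * φ₁ t - (2 / 3) * u t * φ₂ t) t)
    (hk₀ : IsLeast {k : ℝ | ∀ t : ℝ, 0 ≤ t + k * (u t) ^ 2} k₀)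
    (hk₀3 : k₀ < 10 / 3)
    (hp1 : 0 < φ₁ t₀) (hp2 : 0 < φ₂ t₀) (hp0 : 0 < φ₀ t₀)
    (hpc : 0 < (2 / 3) * φ₀ t₀ - ((k₀ - 2) / 6) * u t₀ * φ₁ t₀) :
    (∀ t ≤ t₀, 0 < φ₁ t ∧ 0 < φ₂ t ∧ 0 < φ₀ t ∧
        0 < (2 / 3) * φ₀ t - ((k₀ - 2) / 6) * u t * φ₁ t) ∧
    StrictAntiOn φ₁ (Set.Iic t₀) ∧ StrictAntiOn φ₂ (Set.Iic t₀) ∧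
    StrictAntiOn φ₀ (Set.Iic t₀) ∧
    StrictAntiOn (fun t => (2 / 3) * φ₀ t - ((k₀ - 2) / 6) * u t * φ₁ t) (Set.Iic t₀) := by
  set ψ := fun t ↦ (2 / 3) * φ₀ t - ((k₀ - 2) / 6) * u t * φ₁ t
  have hψ : ∀ t, HasDerivAt ψ ((10 - 3 * k₀) / 18 * u' t * φ₁ t - (6 - k₀) / 9 * u t * φ₂ t) t :=
    fun t ↦ (((h0 t).const_mul (2 / 3)).sub
      (((hu t).const_mul ((k₀ - 2) / 6)).mul (h1 t))).congr_deriv (by ring)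
  have hderiv : ∀ t, 0 < φ₁ t → 0 < φ₂ t → 0 < ψ t → _ := fun t h₁ h₂ hψt ↦
    PainleveII.derivs_neg_of_pos (hupos t) (PainleveII.deriv_neg hu huODE hupos hk₀.1 t) (hk₀.1 t)
      hk₀3 h₁ h₂ hψt
  obtain ⟨hpos, hanti⟩ := pos_and_strictAntiOn_Iic_of_hasDerivAt_neg (f := ![φ₁, φ₂, φ₀, ψ])
    (f' := ![fun t ↦ -(2 / 3) * φ₂ t,
      fun t ↦ -(2 / 3) * u t * φ₀ t - (1 / 6) * (t + 2 * (u t) ^ 2) * φ₁ t,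
      fun t ↦ (1 / 3) * u' t * φ₁ t - (2 / 3) * u t * φ₂ t,
      fun t ↦ (10 - 3 * k₀) / 18 * u' t * φ₁ t - (6 - k₀) / 9 * u t * φ₂ t])
    (fun i ↦ by fin_cases i; exacts [h1, h2, h0, hψ])
    (fun x hx i ↦ by
      have d := hderiv x (hx 0) (hx 1) (hx 3)
      fin_cases i; exacts [d.1, d.2.1, d.2.2.1, d.2.2.2])
    (fun i ↦ by fin_cases i; exacts [hp1, hp2, hp0, hpc])
  exact ⟨fun t ht ↦ ⟨hpos t ht 0, hpos t ht 1, hpos t ht 2, hpos t ht 3⟩,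
    hanti 0, hanti 1, hanti 2, hanti 3⟩

/-- If `(φ₁, φ₂, φ₀)` solves the linear system associated with the
Hastings–McLeod solution `u`, `k₀` is the minimal constant with
`t + k₀u² ≥ 0` (with `2 < k₀ < 10/3`), and all four quantities are positive
at `t₀`, then `φ₁, φ₂, φ₀` and `(2/3)φ₀ − ((k₀−2)/6)uφ₁` are strictly positive
and strictly decreasing on `(−∞, t₀]`. -/
theorem stmt10 (u u' φ₁ φ₂ φ₀ : ℝ → ℝ) (k₀ t₀ : ℝ)
    (hu : ∀ t, HasDerivAt u (u' t) t)
    (huODE : ∀ t, HasDerivAt u' (t * u t + 2 * (u t) ^ 3) t)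
    (hupos : ∀ t, 0 < u t)
    (h1 : ∀ t, HasDerivAt φ₁ (-(2 / 3) * φ₂ t) t)
    (h2 : ∀ t, HasDerivAt φ₂ (-(2 / 3) * u t * φ₀ t - (1 / 6) * (t + 2 * (u t) ^ 2) * φ₁ t) t)
    (h0 : ∀ t, HasDerivAt φ₀ ((1 / 3) * u' t * φ₁ t - (2 / 3) * u t * φ₂ t) t)
    (hk₀ : IsLeast {k : ℝ | ∀ t : ℝ, 0 ≤ t + k * (u t) ^ 2} k₀)
    (hk₀2 : 2 < k₀) (hk₀3 : k₀ < 10 / 3)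
    (hp1 : 0 < φ₁ t₀) (hp2 : 0 < φ₂ t₀) (hp0 : 0 < φ₀ t₀)
    (hpc : 0 < (2 / 3) * φ₀ t₀ - ((k₀ - 2) / 6) * u t₀ * φ₁ t₀) :
    (∀ t ≤ t₀, 0 < φ₁ t ∧ 0 < φ₂ t ∧ 0 < φ₀ t ∧
        0 < (2 / 3) * φ₀ t - ((k₀ - 2) / 6) * u t * φ₁ t) ∧
    StrictAntiOn φ₁ (Set.Iic t₀) ∧ StrictAntiOn φ₂ (Set.Iic t₀) ∧
    StrictAntiOn φ₀ (Set.Iic t₀) ∧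
    StrictAntiOn (fun t => (2 / 3) * φ₀ t - ((k₀ - 2) / 6) * u t * φ₁ t) (Set.Iic t₀) :=
  stmt10_general u u' φ₁ φ₂ φ₀ k₀ t₀ hu huODE hupos h1 h2 h0 hk₀ hk₀3 hp1 hp2 hp0 hpc
end

section
/- Under the hypotheses of the previous statement, φ₁(t) → +∞, φ₂(t) → +∞, and φ₀(t) → +∞ as t → −∞. Moreover φ₁'(t) = −(2/3)φ₂(t) < 0 and φ₂'(t) < −(1/6)(t + k₀u(t)²)·φ₁(t) ≤ 0 on (−∞, t₀]. -/
open Filter Set Topology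

/-!
Since `u > 0` solves `u'' = t u + 2 u³`, its slope is never positive. For `t ≥ 0` a positive
slope persists, the energy `u'² - u⁴` is then nondecreasing, so eventually `u' ≥ u² / 2` and `u`
blows up in finite time. For `t < 0` a positive slope either persists down to `-∞`, keeping `u`
bounded against `t + k₀ u² ≥ 0`, or lies on a hump between zeros `b < a` of `u'`, where
`u''(b) ≥ 0 ≥ u''(a)` gives `2 u(a)² ≤ -a < -b ≤ 2 u(b)²` although `u(b) < u(a)`.

With `ψ = (2/3) φ₀ - ((k₀ - 2)/6) u φ₁` the system reads
`φ₂' = -u ψ - (t + k₀ u²) φ₁ / 6` and `ψ' = ((10 - 3k₀)/18) u' φ₁ + ((k₀ - 6)/9) u φ₂`,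
so for `k₀ ≤ 10/3` none of `φ₁, φ₂, ψ` increases while all three are positive. Hence they stay
positive backwards from `t₀`, and for `t ≤ min t₀ (-k₀)` (where `u ≥ 1`) the derivatives of
`φ₁, φ₂, φ₀` are bounded above by negative constants.
-/

section Calculus

variable {f f' : ℝ → ℝ}

theorem strictMonoOn_of_hasDerivAt_pos {D : Set ℝ} (hD : Convex ℝ D)
    (hf : ∀ x, HasDerivAt f (f' x) x) (hf' : ∀ x ∈ interior D, 0 < f' x) : StrictMonoOn f D :=
  strictMonoOn_of_hasDerivWithinAt_pos hD (fun x _ => (hf x).continuousAt.continuousWithinAt)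
    (fun x _ => (hf x).hasDerivWithinAt) hf'

theorem monotoneOn_of_hasDerivAt_nonneg {D : Set ℝ} (hD : Convex ℝ D)
    (hf : ∀ x, HasDerivAt f (f' x) x) (hf' : ∀ x ∈ interior D, 0 ≤ f' x) : MonotoneOn f D :=
  monotoneOn_of_hasDerivWithinAt_nonneg hD (fun x _ => (hf x).continuousAt.continuousWithinAt)
    (fun x _ => (hf x).hasDerivWithinAt) hf'

theorem antitoneOn_of_hasDerivAt_nonpos {D : Set ℝ} (hD : Convex ℝ D)
    (hf : ∀ x, HasDerivAt f (f' x) x) (hf' : ∀ x ∈ interior D, f' x ≤ 0) : AntitoneOn f D :=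
  antitoneOn_of_hasDerivWithinAt_nonpos hD (fun x _ => (hf x).continuousAt.continuousWithinAt)
    (fun x _ => (hf x).hasDerivWithinAt) hf'

theorem tendsto_atTop_atTop_of_le_hasDerivAt {c T : ℝ} (hf : ∀ x, HasDerivAt f (f' x) x)
    (hc : 0 < c) (h : ∀ x ≥ T, c ≤ f' x) : Tendsto f atTop atTop := by
  have hlin : ∀ x ≥ T, c * (x - T) + f T ≤ f x := fun x hx => by
    have := (convex_Ici T).mul_sub_le_image_sub_of_le_deriv
      (fun y _ => (hf y).continuousAt.continuousWithinAt)
      (fun y _ => (hf y).differentiableAt.differentiableWithinAt)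
      (fun y hy => by rw [(hf y).deriv]; exact h y (interior_subset hy)) T self_mem_Ici x hx hx
    linarith
  refine tendsto_atTop_mono' atTop ?_ <| tendsto_atTop_add_const_right _ (f T) <|
    (tendsto_atTop_add_const_right _ (-T) tendsto_id).const_mul_atTop hc
  filter_upwards [eventually_ge_atTop T] with x hx
  simpa [sub_eq_add_neg] using hlin x hx

theorem tendsto_atBot_atTop_of_hasDerivAt_le_neg {c T : ℝ} (hf : ∀ x, HasDerivAt f (f' x) x)
    (hc : 0 < c) (h : ∀ x ≤ T, f' x ≤ -c) : Tendsto f atBot atTop := by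
  have hneg : ∀ x, HasDerivAt (fun y => f (-y)) (-f' (-x)) x := fun x => by
    simpa [Function.comp_def] using (hf (-x)).comp x (hasDerivAt_neg x)
  have := tendsto_atTop_atTop_of_le_hasDerivAt hneg hc (T := -T) fun x hx => by
    linarith [h (-x) (by linarith)]
  simpa [Function.comp_def] using this.comp tendsto_neg_atBot_atTop

theorem HasDerivAt.nonneg_of_eventually_le_right {x f'x : ℝ} (hf : HasDerivAt f f'x x)
    (h : ∀ᶠ t in 𝓝[>] x, f x ≤ f t) : 0 ≤ f'x := by
  refine ge_of_tendsto (hasDerivAt_iff_tendsto_slope_left_right.1 hf).2 ?_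
  filter_upwards [h, self_mem_nhdsWithin] with t ht htx
  rw [slope_def_field]
  exact div_nonneg (sub_nonneg.2 ht) (sub_nonneg.2 (le_of_lt htx))

theorem HasDerivAt.nonpos_of_eventually_le_left {x f'x : ℝ} (hf : HasDerivAt f f'x x)
    (h : ∀ᶠ t in 𝓝[<] x, f x ≤ f t) : f'x ≤ 0 := by
  refine le_of_tendsto (hasDerivAt_iff_tendsto_slope_left_right.1 hf).1 ?_
  filter_upwards [h, self_mem_nhdsWithin] with t ht htx
  rw [slope_def_field]
  exact div_nonpos_of_nonneg_of_nonpos (sub_nonneg.2 ht) (sub_nonpos.2 (le_of_lt htx))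

theorem exists_mem_Ioc_eq_zero_forall_pos (hf : Continuous f) {a c : ℝ} (hac : a ≤ c)
    (ha : 0 < f a) (hc : f c ≤ 0) : ∃ a' ∈ Ioc a c, f a' = 0 ∧ ∀ t ∈ Ico a a', 0 < f t := by
  set S := Icc a c ∩ f ⁻¹' Iic 0
  have hbdd : BddBelow S := ⟨a, fun x hx => hx.1.1⟩
  obtain ⟨⟨hax, hxc⟩, hfx⟩ : sInf S ∈ S :=
    (isClosed_Icc.inter (isClosed_Iic.preimage hf)).csInf_mem ⟨c, ⟨hac, le_rfl⟩, hc⟩ hbdd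
  have hpos : ∀ t ∈ Ico a (sInf S), 0 < f t := fun t ht => by
    by_contra! h
    exact (csInf_le hbdd ⟨⟨ht.1, ht.2.le.trans hxc⟩, h⟩).not_gt ht.2
  have hlt : a < sInf S := lt_of_le_of_ne hax fun h => by rw [← h] at hfx; exact hfx.not_gt ha
  refine ⟨sInf S, ⟨hlt, hxc⟩, le_antisymm hfx ?_, hpos⟩
  refine ge_of_tendsto
    (hf.continuousAt.tendsto.mono_left (nhdsWithin_le_nhds (s := Iio (sInf S)))) ?_
  filter_upwards [Ioo_mem_nhdsLT hlt] with t ht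
  exact (hpos t ⟨ht.1.le, ht.2⟩).le

theorem exists_mem_Ico_eq_zero_forall_pos (hf : Continuous f) {c a : ℝ} (hca : c ≤ a)
    (ha : 0 < f a) (hc : f c ≤ 0) : ∃ b ∈ Ico c a, f b = 0 ∧ ∀ t ∈ Ioc b a, 0 < f t := by
  obtain ⟨b, ⟨hab, hbc⟩, hb, hpos⟩ := exists_mem_Ioc_eq_zero_forall_pos
    (f := fun t => f (-t)) (hf.comp continuous_neg) (neg_le_neg hca) (by simpa) (by simpa)
  refine ⟨-b, ⟨by linarith, by linarith⟩, hb, fun t ht => ?_⟩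
  simpa using hpos (-t) ⟨by linarith [ht.2], by linarith [ht.1]⟩

theorem not_eventually_mul_sq_le_deriv {c : ℝ} (hf : ∀ t, HasDerivAt f (f' t) t)
    (hfpos : ∀ t, 0 < f t) (hc : 0 < c) : ¬ ∀ᶠ t in atTop, c * f t ^ 2 ≤ f' t := by
  intro h
  obtain ⟨T, hT⟩ := eventually_atTop.1 h
  -- `-1/f` grows at least linearly, yet stays negative
  have hinv : ∀ t, HasDerivAt (fun t => -(f t)⁻¹) (f' t / f t ^ 2) t := fun t =>
    ((hf t).inv (hfpos t).ne').neg.congr_deriv (by ring)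
  have hlim := tendsto_atTop_atTop_of_le_hasDerivAt hinv hc fun t ht => by
    rw [le_div_iff₀ (pow_pos (hfpos t) 2)]
    exact hT t ht
  obtain ⟨t, ht⟩ := (hlim.eventually_gt_atTop 0).exists
  exact (neg_neg_of_pos (inv_pos.2 (hfpos t))).not_gt ht

theorem forall_pos_of_le_of_deriv_nonpos {ι : Type*} [Finite ι] {f f' : ι → ℝ → ℝ} {t₀ x : ℝ}
    (hf : ∀ i x, HasDerivAt (f i) (f' i x) x)
    (hf' : ∀ x < t₀, (∀ i, 0 < f i x) → ∀ i, f' i x ≤ 0) (h₀ : ∀ i, 0 < f i t₀) (hx : x ≤ t₀) :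
    ∀ i, 0 < f i x := by
  by_contra! ⟨i, hi⟩
  set B := Icc x t₀ ∩ ⋃ i, f i ⁻¹' Iic 0
  have hbdd : BddAbove B := ⟨t₀, fun y hy => hy.1.2⟩
  obtain ⟨⟨hxr, hrt⟩, hr⟩ : sSup B ∈ B :=
    (isClosed_Icc.inter (isClosed_iUnion_of_finite fun i => isClosed_Iic.preimage
      (continuous_iff_continuousAt.2 fun x => (hf i x).continuousAt))).csSup_mem
      ⟨x, ⟨le_rfl, hx⟩, mem_iUnion.2 ⟨i, hi⟩⟩ hbdd
  obtain ⟨j, hj⟩ := mem_iUnion.1 hr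
  have hpos : ∀ y ∈ Ioc (sSup B) t₀, ∀ i, 0 < f i y := fun y hy i => by
    by_contra! h
    exact (le_csSup hbdd ⟨⟨hxr.trans hy.1.le, hy.2⟩, mem_iUnion.2 ⟨i, h⟩⟩).not_gt hy.1
  have hanti : AntitoneOn (f j) (Icc (sSup B) t₀) :=
    antitoneOn_of_hasDerivAt_nonpos (convex_Icc _ t₀) (hf j) fun y hy => by
      rw [interior_Icc] at hy
      exact hf' y hy.2 (hpos y ⟨hy.1, hy.2.le⟩) j
  exact (hj : f j (sSup B) ≤ 0).not_gt <|
    (h₀ j).trans_le (hanti ⟨le_rfl, hrt⟩ ⟨hrt, le_rfl⟩ hrt)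

end Calculus

namespace PainleveII

variable {u u' : ℝ → ℝ}

theorem deriv_nonpos_of_nonneg (hu : ∀ t, HasDerivAt u (u' t) t)
    (huODE : ∀ t, HasDerivAt u' (t * u t + 2 * u t ^ 3) t) (hupos : ∀ t, 0 < u t)
    {b : ℝ} (hb : 0 ≤ b) : u' b ≤ 0 := by
  by_contra! hδ
  have hmono : MonotoneOn u' (Ici b) :=
    monotoneOn_of_hasDerivAt_nonneg (convex_Ici b) huODE fun t ht => by
      have := hupos t
      have : 0 ≤ t := hb.trans (interior_subset ht)
      positivity
  have hu'ge : ∀ t ≥ b, u' b ≤ u' t := fun t ht => hmono self_mem_Ici ht ht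
  -- the energy `u'² - u⁴` is nondecreasing where `t ≥ 0` and `u' ≥ 0`
  have henergy : MonotoneOn (fun t => u' t ^ 2 - u t ^ 4) (Ici b) :=
    monotoneOn_of_hasDerivAt_nonneg (f' := fun t => 2 * t * u t * u' t) (convex_Ici b)
      (fun t => (((huODE t).pow 2).sub ((hu t).pow 4)).congr_deriv (by ring)) fun t ht => by
        have := hupos t
        have : 0 ≤ t := hb.trans (interior_subset ht)
        have : 0 ≤ u' t := hδ.le.trans (hu'ge t (interior_subset ht))
        positivity
  have hu4 : Tendsto (fun t => u t ^ 4) atTop atTop :=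
    (tendsto_pow_atTop (by norm_num)).comp (tendsto_atTop_atTop_of_le_hasDerivAt hu hδ hu'ge)
  refine not_eventually_mul_sq_le_deriv hu hupos (c := 1 / 2) (by norm_num) ?_
  filter_upwards [hu4.eventually_ge_atTop (-2 * (u' b ^ 2 - u b ^ 4)), eventually_ge_atTop b]
    with t hut hbt
  have hE := henergy self_mem_Ici hbt hbt
  have hu't := hδ.trans_le (hu'ge t hbt)
  nlinarith [hupos t]

theorem false_of_deriv_pos_between_zeros (hu : ∀ t, HasDerivAt u (u' t) t)
    (huODE : ∀ t, HasDerivAt u' (t * u t + 2 * u t ^ 3) t) (hupos : ∀ t, 0 < u t)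
    {a b : ℝ} (hba : b < a) (hb : u' b = 0) (ha : u' a = 0) (hpos : ∀ t ∈ Ioo b a, 0 < u' t) :
    False := by
  have hu''b : 0 ≤ b * u b + 2 * u b ^ 3 := (huODE b).nonneg_of_eventually_le_right <| by
    filter_upwards [Ioo_mem_nhdsGT hba] with t ht
    exact hb ▸ (hpos t ht).le
  have hu''a : a * u a + 2 * u a ^ 3 ≤ 0 := (huODE a).nonpos_of_eventually_le_left <| by
    filter_upwards [Ioo_mem_nhdsLT hba] with t ht
    exact ha ▸ (hpos t ht).le
  have hlt : u b < u a := strictMonoOn_of_hasDerivAt_pos (convex_Icc b a) hu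
    (fun t ht => by rw [interior_Icc] at ht; exact hpos t ht) ⟨le_rfl, hba.le⟩ ⟨hba.le, le_rfl⟩ hba
  -- `u'' = u (t + 2u²)`, so `2 u(a)² ≤ -a < -b ≤ 2 u(b)²`
  have hb' : 0 ≤ b + 2 * u b ^ 2 := by nlinarith [hupos b]
  have ha' : a + 2 * u a ^ 2 ≤ 0 := by nlinarith [hupos a]
  nlinarith [hupos b]

theorem exists_le_deriv_nonpos (hu : ∀ t, HasDerivAt u (u' t) t) (hupos : ∀ t, 0 < u t)
    {k : ℝ} (hlow : ∀ t, 0 ≤ t + k * u t ^ 2) (hk : 0 < k) (a : ℝ) : ∃ c ≤ a, u' c ≤ 0 := by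
  by_contra! h
  have hmono : MonotoneOn u (Iic a) := monotoneOn_of_hasDerivAt_nonneg (convex_Iic a) hu
    fun t ht => (h t (interior_subset ht : t ∈ Iic a)).le
  set t := min a (-(k * u a ^ 2) - 1)
  have hut : u t ≤ u a := hmono (mem_Iic.2 (min_le_left _ _)) self_mem_Iic (min_le_left _ _)
  have hsq : k * u t ^ 2 ≤ k * u a ^ 2 :=
    mul_le_mul_of_nonneg_left (pow_le_pow_left₀ (hupos t).le hut 2) hk.le
  linarith [hlow t, min_le_right a (-(k * u a ^ 2) - 1)]

theorem deriv_nonpos (hu : ∀ t, HasDerivAt u (u' t) t)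
    (huODE : ∀ t, HasDerivAt u' (t * u t + 2 * u t ^ 3) t) (hupos : ∀ t, 0 < u t)
    {k : ℝ} (hlow : ∀ t, 0 ≤ t + k * u t ^ 2) (hk : 0 < k) (a : ℝ) : u' a ≤ 0 := by
  by_contra! ha
  have hcont : Continuous u' := continuous_iff_continuousAt.2 fun t => (huODE t).continuousAt
  have ha0 : a < 0 := by
    by_contra! h
    exact ha.not_ge (deriv_nonpos_of_nonneg hu huODE hupos h)
  obtain ⟨a', ⟨haa', -⟩, ha', hright⟩ := exists_mem_Ioc_eq_zero_forall_pos hcont ha0.le ha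
    (deriv_nonpos_of_nonneg hu huODE hupos le_rfl)
  obtain ⟨c, hca, hc⟩ := exists_le_deriv_nonpos hu hupos hlow hk a
  obtain ⟨b, ⟨-, hba⟩, hb, hleft⟩ := exists_mem_Ico_eq_zero_forall_pos hcont hca ha hc
  refine false_of_deriv_pos_between_zeros hu huODE hupos (hba.trans haa') hb ha' fun t ht => ?_
  rcases le_or_gt t a with hta | hat
  · exact hleft t ⟨ht.1, hta⟩
  · exact hright t ⟨hat.le, ht.2⟩

end PainleveII

section LinearSystem

variable {u u' φ₁ φ₂ φ₀ : ℝ → ℝ} {k₀ : ℝ}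

noncomputable def psi (k₀ : ℝ) (u φ₁ φ₀ : ℝ → ℝ) (t : ℝ) : ℝ :=
  2 / 3 * φ₀ t - (k₀ - 2) / 6 * u t * φ₁ t

theorem hasDerivAt_phi₂_of_psi (k₀ : ℝ)
    (h2 : ∀ t, HasDerivAt φ₂ (-(2 / 3) * u t * φ₀ t - (1 / 6) * (t + 2 * (u t) ^ 2) * φ₁ t) t)
    (t : ℝ) :
    HasDerivAt φ₂ (-(u t * psi k₀ u φ₁ φ₀ t) - 1 / 6 * (t + k₀ * u t ^ 2) * φ₁ t) t :=
  (h2 t).congr_deriv (by unfold psi; ring)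

theorem hasDerivAt_psi (hu : ∀ t, HasDerivAt u (u' t) t)
    (h1 : ∀ t, HasDerivAt φ₁ (-(2 / 3) * φ₂ t) t)
    (h0 : ∀ t, HasDerivAt φ₀ ((1 / 3) * u' t * φ₁ t - (2 / 3) * u t * φ₂ t) t) (t : ℝ) :
    HasDerivAt (psi k₀ u φ₁ φ₀)
      ((10 - 3 * k₀) / 18 * u' t * φ₁ t + (k₀ - 6) / 9 * u t * φ₂ t) t :=
  (((h0 t).const_mul (2 / 3)).sub (((hu t).const_mul ((k₀ - 2) / 6)).mul (h1 t))).congr_deriv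
    (by ring)

theorem phi₁_phi₂_psi_pos_of_le (hu : ∀ t, HasDerivAt u (u' t) t) (hupos : ∀ t, 0 < u t)
    (hu' : ∀ t, u' t ≤ 0) (hlow : ∀ t, 0 ≤ t + k₀ * u t ^ 2) (hk₀' : k₀ ≤ 10 / 3)
    (h1 : ∀ t, HasDerivAt φ₁ (-(2 / 3) * φ₂ t) t)
    (h2 : ∀ t, HasDerivAt φ₂ (-(2 / 3) * u t * φ₀ t - (1 / 6) * (t + 2 * (u t) ^ 2) * φ₁ t) t)
    (h0 : ∀ t, HasDerivAt φ₀ ((1 / 3) * u' t * φ₁ t - (2 / 3) * u t * φ₂ t) t) {t₀ : ℝ}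
    (hp1 : 0 < φ₁ t₀) (hp2 : 0 < φ₂ t₀) (hpc : 0 < psi k₀ u φ₁ φ₀ t₀) {t : ℝ} (ht : t ≤ t₀) :
    0 < φ₁ t ∧ 0 < φ₂ t ∧ 0 < psi k₀ u φ₁ φ₀ t := by
  have hpos := forall_pos_of_le_of_deriv_nonpos (f := ![φ₁, φ₂, psi k₀ u φ₁ φ₀])
    (f' := ![fun t => -(2 / 3) * φ₂ t,
      fun t => -(u t * psi k₀ u φ₁ φ₀ t) - 1 / 6 * (t + k₀ * u t ^ 2) * φ₁ t,
      fun t => (10 - 3 * k₀) / 18 * u' t * φ₁ t + (k₀ - 6) / 9 * u t * φ₂ t])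
    (fun i x => by
      fin_cases i
      exacts [h1 x, hasDerivAt_phi₂_of_psi k₀ h2 x, hasDerivAt_psi hu h1 h0 x])
    (fun x _ hx i => by
      have h₁ : 0 < φ₁ x := hx 0
      have h₂ : 0 < φ₂ x := hx 1
      have hψ : 0 < psi k₀ u φ₁ φ₀ x := hx 2
      have hu'φ₁ : u' x * φ₁ x ≤ 0 := mul_nonpos_of_nonpos_of_nonneg (hu' x) h₁.le
      fin_cases i
      exacts [show -(2 / 3) * φ₂ x ≤ 0 by linarith,
        by show _ - _ ≤ 0; nlinarith [mul_pos (hupos x) hψ, mul_nonneg (hlow x) h₁.le],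
        by show _ + _ ≤ 0; nlinarith [mul_pos (hupos x) h₂]])
    (fun i => by fin_cases i <;> assumption) ht
  exact ⟨hpos 0, hpos 1, hpos 2⟩

theorem tendsto_phi_atBot_atTop (hu : ∀ t, HasDerivAt u (u' t) t) (hupos : ∀ t, 0 < u t)
    (hu' : ∀ t, u' t ≤ 0) (hlow : ∀ t, 0 ≤ t + k₀ * u t ^ 2) (hk₀ : 0 < k₀) (hk₀' : k₀ ≤ 10 / 3)
    (h1 : ∀ t, HasDerivAt φ₁ (-(2 / 3) * φ₂ t) t)
    (h2 : ∀ t, HasDerivAt φ₂ (-(2 / 3) * u t * φ₀ t - (1 / 6) * (t + 2 * (u t) ^ 2) * φ₁ t) t)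
    (h0 : ∀ t, HasDerivAt φ₀ ((1 / 3) * u' t * φ₁ t - (2 / 3) * u t * φ₂ t) t) {t₀ : ℝ}
    (hpos : ∀ t ≤ t₀, 0 < φ₁ t ∧ 0 < φ₂ t ∧ 0 < psi k₀ u φ₁ φ₀ t) :
    Tendsto φ₁ atBot atTop ∧ Tendsto φ₂ atBot atTop ∧ Tendsto φ₀ atBot atTop := by
  have hφ₂ : AntitoneOn φ₂ (Iic t₀) := antitoneOn_of_hasDerivAt_nonpos (convex_Iic t₀)
    (hasDerivAt_phi₂_of_psi k₀ h2) fun t ht => by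
      obtain ⟨hφ₁, -, hψ⟩ := hpos t (interior_subset ht : t ∈ Iic t₀)
      nlinarith [mul_pos (hupos t) hψ, mul_nonneg (hlow t) hφ₁.le]
  have hψ : AntitoneOn (psi k₀ u φ₁ φ₀) (Iic t₀) := antitoneOn_of_hasDerivAt_nonpos
    (convex_Iic t₀) (hasDerivAt_psi hu h1 h0) fun t ht => by
      obtain ⟨hφ₁, hφ₂, -⟩ := hpos t (interior_subset ht : t ∈ Iic t₀)
      nlinarith [mul_pos (hupos t) hφ₂, mul_nonpos_of_nonpos_of_nonneg (hu' t) hφ₁.le]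
  have hu1 : ∀ t ≤ -k₀, 1 ≤ u t := fun t ht => by
    have : 1 ≤ u t ^ 2 := le_of_mul_le_mul_left (by linarith [hlow t]) hk₀
    nlinarith [hupos t]
  obtain ⟨hφ₁t₀, hφ₂t₀, hψt₀⟩ := hpos t₀ le_rfl
  refine ⟨?_, ?_, ?_⟩
  · refine tendsto_atBot_atTop_of_hasDerivAt_le_neg h1 (by positivity : 0 < 2 / 3 * φ₂ t₀)
      (T := t₀) fun t ht => ?_
    linarith [hφ₂ (mem_Iic.2 ht) self_mem_Iic ht]
  · refine tendsto_atBot_atTop_of_hasDerivAt_le_neg (hasDerivAt_phi₂_of_psi k₀ h2) hψt₀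
      (T := min t₀ (-k₀)) fun t ht => ?_
    have ht₀ := ht.trans (min_le_left _ _)
    nlinarith [hψ (mem_Iic.2 ht₀) self_mem_Iic ht₀, mul_nonneg (hlow t) (hpos t ht₀).1.le,
      mul_nonneg (sub_nonneg.2 (hu1 t (ht.trans (min_le_right _ _)))) (hpos t ht₀).2.2.le]
  · refine tendsto_atBot_atTop_of_hasDerivAt_le_neg h0 (by positivity : 0 < 2 / 3 * φ₂ t₀)
      (T := min t₀ (-k₀)) fun t ht => ?_
    have ht₀ := ht.trans (min_le_left _ _)
    nlinarith [hφ₂ (mem_Iic.2 ht₀) self_mem_Iic ht₀, hu1 t (ht.trans (min_le_right _ _)),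
      mul_nonpos_of_nonpos_of_nonneg (hu' t) (hpos t ht₀).1.le]

end LinearSystem

theorem stmt11_general (u u' φ₁ φ₂ φ₀ : ℝ → ℝ) (k₀ t₀ : ℝ)
    (hu : ∀ t, HasDerivAt u (u' t) t)
    (huODE : ∀ t, HasDerivAt u' (t * u t + 2 * (u t) ^ 3) t)
    (hupos : ∀ t, 0 < u t)
    (h1 : ∀ t, HasDerivAt φ₁ (-(2 / 3) * φ₂ t) t)
    (h2 : ∀ t, HasDerivAt φ₂ (-(2 / 3) * u t * φ₀ t - (1 / 6) * (t + 2 * (u t) ^ 2) * φ₁ t) t)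
    (h0 : ∀ t, HasDerivAt φ₀ ((1 / 3) * u' t * φ₁ t - (2 / 3) * u t * φ₂ t) t)
    (hk₀ : IsLeast {k : ℝ | ∀ t : ℝ, 0 ≤ t + k * (u t) ^ 2} k₀)
    (hk₀2 : 2 < k₀) (hk₀3 : k₀ < 10 / 3)
    (hp1 : 0 < φ₁ t₀) (hp2 : 0 < φ₂ t₀)
    (hpc : 0 < (2 / 3) * φ₀ t₀ - ((k₀ - 2) / 6) * u t₀ * φ₁ t₀) :
    Tendsto φ₁ atBot atTop ∧ Tendsto φ₂ atBot atTop ∧ Tendsto φ₀ atBot atTop ∧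
    ∀ t ≤ t₀,
      (deriv φ₁ t = -(2 / 3) * φ₂ t ∧ deriv φ₁ t < 0) ∧
      deriv φ₂ t < -(1 / 6) * (t + k₀ * (u t) ^ 2) * φ₁ t ∧
      -(1 / 6) * (t + k₀ * (u t) ^ 2) * φ₁ t ≤ 0 := by
  have hk₀pos : 0 < k₀ := by linarith
  have hlow : ∀ t, 0 ≤ t + k₀ * u t ^ 2 := hk₀.1
  have hu' : ∀ t, u' t ≤ 0 := PainleveII.deriv_nonpos hu huODE hupos hlow hk₀pos
  have hpos : ∀ t ≤ t₀, 0 < φ₁ t ∧ 0 < φ₂ t ∧ 0 < psi k₀ u φ₁ φ₀ t := fun t ht =>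
    phi₁_phi₂_psi_pos_of_le hu hupos hu' hlow hk₀3.le h1 h2 h0 hp1 hp2 hpc ht
  obtain ⟨hlim₁, hlim₂, hlim₀⟩ :=
    tendsto_phi_atBot_atTop hu hupos hu' hlow hk₀pos hk₀3.le h1 h2 h0 hpos
  refine ⟨hlim₁, hlim₂, hlim₀, fun t ht => ?_⟩
  obtain ⟨hφ₁, hφ₂, hψ⟩ := hpos t ht
  rw [(h1 t).deriv, (hasDerivAt_phi₂_of_psi k₀ h2 t).deriv]
  refine ⟨⟨rfl, by linarith⟩, ?_, ?_⟩
  · nlinarith [mul_pos (hupos t) hψ]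
  · nlinarith [mul_nonneg (hlow t) hφ₁.le]

/-- Under the hypotheses of the previous statement, `φ₁, φ₂, φ₀ → +∞` as
`t → −∞`; moreover `φ₁' = −(2/3)φ₂ < 0` and
`φ₂' < −(1/6)(t + k₀u²)φ₁ ≤ 0` on `(−∞, t₀]`. -/
theorem stmt11 (u u' φ₁ φ₂ φ₀ : ℝ → ℝ) (k₀ t₀ : ℝ)
    (hu : ∀ t, HasDerivAt u (u' t) t)
    (huODE : ∀ t, HasDerivAt u' (t * u t + 2 * (u t) ^ 3) t)
    (hupos : ∀ t, 0 < u t)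
    (h1 : ∀ t, HasDerivAt φ₁ (-(2 / 3) * φ₂ t) t)
    (h2 : ∀ t, HasDerivAt φ₂ (-(2 / 3) * u t * φ₀ t - (1 / 6) * (t + 2 * (u t) ^ 2) * φ₁ t) t)
    (h0 : ∀ t, HasDerivAt φ₀ ((1 / 3) * u' t * φ₁ t - (2 / 3) * u t * φ₂ t) t)
    (hk₀ : IsLeast {k : ℝ | ∀ t : ℝ, 0 ≤ t + k * (u t) ^ 2} k₀)
    (hk₀2 : 2 < k₀) (hk₀3 : k₀ < 10 / 3)
    (hp1 : 0 < φ₁ t₀) (hp2 : 0 < φ₂ t₀) (hp0 : 0 < φ₀ t₀)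
    (hpc : 0 < (2 / 3) * φ₀ t₀ - ((k₀ - 2) / 6) * u t₀ * φ₁ t₀) :
    Tendsto φ₁ atBot atTop ∧ Tendsto φ₂ atBot atTop ∧ Tendsto φ₀ atBot atTop ∧
    ∀ t ≤ t₀,
      (deriv φ₁ t = -(2 / 3) * φ₂ t ∧ deriv φ₁ t < 0) ∧
      deriv φ₂ t < -(1 / 6) * (t + k₀ * (u t) ^ 2) * φ₁ t ∧
      -(1 / 6) * (t + k₀ * (u t) ^ 2) * φ₁ t ≤ 0 :=
  stmt11_general u u' φ₁ φ₂ φ₀ k₀ t₀ hu huODE hupos h1 h2 h0 hk₀ hk₀2 hk₀3 hp1 hp2 hpc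
end
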